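/- arXiv:2511.09651 — 8 statements merged into one kernel-verified Lean document; each statement's English description precedes it below -/
import Mathlib

section
/- Let V be a finite-dimensional complex inner product space and {Π^n(φ)}_{n∈N} a continuously differentiable family of self-adjoint idempotents on V with Π^nΠ^m = 0 for n ≠ m and Σ_n Π^n = 1 at every φ ∈ ℝ^d, and let A_μ(φ) = (i/2) Σ_n [∂_μΠ^n(φ), Π^n(φ)] be the Kato gauge potential. Then for any subset S ⊆ N, the partial-sum projector Π_S(φ) = Σ_{m∈S} Π^m(φ) satisfies ∂_μΠ_S(φ) = −i [A_μ(φ), Π_S(φ)]. -/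
/-- Pure algebra behind Theorem 3: the commutator of `T = ∑ [D n, P n]` with a
partial sum of the orthogonal idempotents equals twice the sum of derivatives. -/
lemma kato_key {R : Type*} [Ring R] {N : Type*} [Fintype N] (P D : N → R)
    (hidem : ∀ n, P n * P n = P n)
    (horth : ∀ n m, n ≠ m → P n * P m = 0)
    (hsum : ∑ n, P n = 1)
    (hD : ∀ n, D n = D n * P n + P n * D n)
    (hDo : ∀ n m, n ≠ m → D n * P m + P n * D m = 0)
    (S : Finset N) :
    (∑ n, (D n * P n - P n * D n)) * (∑ m ∈ S, P m)
      - (∑ m ∈ S, P m) * (∑ n, (D n * P n - P n * D n))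
      = (∑ m ∈ S, D m) + (∑ m ∈ S, D m) := by
  classical
  have hPDP : ∀ m, P m * D m * P m = 0 := by
    intro m
    have e1 : P m * (D m * P m) * P m = P m * D m * P m := by
      rw [← mul_assoc, mul_assoc (P m * D m), hidem]
    have e2 : P m * (P m * D m) * P m = P m * D m * P m := by
      rw [← mul_assoc, hidem]
    have h : P m * D m * P m = P m * D m * P m + P m * D m * P m := by
      nth_rewrite 1 [hD m]
      rw [mul_add, add_mul, e1, e2]
    exact (left_eq_add.mp h)
  have hmain : ∀ m, (∑ n, ((D n * P n - P n * D n) * P m - P m * (D n * P n - P n * D n)))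
      = D m + D m := by
    intro m
    rw [Fintype.sum_eq_add_sum_compl m]
    have hdiag : (D m * P m - P m * D m) * P m - P m * (D m * P m - P m * D m)
        = D m := by
      rw [sub_mul, mul_sub]
      rw [mul_assoc (D m), hidem]
      rw [show P m * D m * P m = 0 from hPDP m]
      rw [show P m * (D m * P m) = 0 from by rw [← mul_assoc]; exact hPDP m]
      rw [← mul_assoc, hidem]
      nth_rewrite 3 [hD m]
      abel
    rw [hdiag]
    have hoff : ∀ n ∈ ({m} : Finset N)ᶜ,
        (D n * P n - P n * D n) * P m - P m * (D n * P n - P n * D n)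
          = P n * D m + D m * P n := by
      intro n hn
      have hnm : n ≠ m := by simpa using hn
      have f1 : D n * P n * P m = 0 := by rw [mul_assoc, horth n m hnm, mul_zero]
      have f2 : P n * D n * P m = -(P n * D m) := by
        have h2 : D n * P m = -(P n * D m) := eq_neg_of_add_eq_zero_left (hDo n m hnm)
        rw [mul_assoc, h2, mul_neg, ← mul_assoc, hidem n]
      have f3 : P m * (D n * P n) = -(D m * P n) := by
        have h3 : P m * D n = -(D m * P n) := eq_neg_of_add_eq_zero_right (hDo m n hnm.symm)
        rw [← mul_assoc, h3, neg_mul, mul_assoc, hidem n]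
      have f4 : P m * (P n * D n) = 0 := by rw [← mul_assoc, horth m n hnm.symm, zero_mul]
      rw [sub_mul, mul_sub, f1, f2, f3, f4]
      abel
    rw [Finset.sum_congr rfl hoff, Finset.sum_add_distrib, ← Finset.sum_mul, ← Finset.mul_sum]
    have hcompl : ∑ n ∈ ({m} : Finset N)ᶜ, P n = 1 - P m := by
      have h := Fintype.sum_eq_add_sum_compl m P
      rw [hsum] at h
      exact eq_sub_of_add_eq' h.symm
    rw [hcompl, sub_mul, one_mul, mul_sub, mul_one]
    nth_rewrite 4 [hD m]
    abel
  have step : (∑ m ∈ S, ((∑ n, (D n * P n - P n * D n)) * P m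
        - P m * ∑ n, (D n * P n - P n * D n)))
      = (∑ n, (D n * P n - P n * D n)) * (∑ m ∈ S, P m)
        - (∑ m ∈ S, P m) * (∑ n, (D n * P n - P n * D n)) := by
    rw [Finset.sum_sub_distrib, ← Finset.mul_sum, ← Finset.sum_mul]
  rw [← step]
  calc (∑ m ∈ S, ((∑ n, (D n * P n - P n * D n)) * P m
          - P m * ∑ n, (D n * P n - P n * D n)))
      = ∑ m ∈ S, (D m + D m) := by
        refine Finset.sum_congr rfl fun m _ => ?_
        rw [Finset.sum_mul, Finset.mul_sum, ← Finset.sum_sub_distrib, hmain m]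
    _ = (∑ m ∈ S, D m) + (∑ m ∈ S, D m) := Finset.sum_add_distrib

/-- Theorem 3 of the supplement. For a smooth orthogonal
resolution of the identity `{Π^n(φ)}` with Kato gauge potential
`A_μ(φ) = (i/2) Σ_n [∂_μΠ^n(φ), Π^n(φ)]`, every partial-sum projector
`Π_S(φ) = Σ_{m∈S} Π^m(φ)` satisfies `∂_μ Π_S(φ) = −i [A_μ(φ), Π_S(φ)]`. -/
theorem partial_sum_projector_derivative_eq_commutator_with_kato
    {V : Type*} [NormedAddCommGroup V] [InnerProductSpace ℂ V] [FiniteDimensional ℂ V]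
    {d : ℕ} {N : Type*} [Fintype N]
    (Proj : N → EuclideanSpace ℝ (Fin d) → (V →L[ℂ] V))
    (hC1 : ∀ n, ContDiff ℝ 1 (Proj n))
    (hsa : ∀ n φ, IsSelfAdjoint (Proj n φ))
    (hidem : ∀ n φ, Proj n φ * Proj n φ = Proj n φ)
    (horth : ∀ n m, n ≠ m → ∀ φ, Proj n φ * Proj m φ = 0)
    (hsum : ∀ φ, ∑ n, Proj n φ = 1)
    (A : Fin d → EuclideanSpace ℝ (Fin d) → (V →L[ℂ] V))
    (hA : ∀ μ φ, A μ φ = (Complex.I / 2) • ∑ n,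
      (fderiv ℝ (Proj n) φ (EuclideanSpace.single μ 1) * Proj n φ
        - Proj n φ * fderiv ℝ (Proj n) φ (EuclideanSpace.single μ 1)))
    (S : Finset N)
    (PiS : EuclideanSpace ℝ (Fin d) → (V →L[ℂ] V))
    (hPiS : ∀ φ, PiS φ = ∑ m ∈ S, Proj m φ)
    (μ : Fin d) (φ : EuclideanSpace ℝ (Fin d)) :
    fderiv ℝ PiS φ (EuclideanSpace.single μ 1)
      = (-Complex.I) • (A μ φ * PiS φ - PiS φ * A μ φ) := by
  classical
  set v : EuclideanSpace ℝ (Fin d) := EuclideanSpace.single μ 1 with hv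
  have hdiff : ∀ n, DifferentiableAt ℝ (Proj n) φ :=
    fun n => ((hC1 n).differentiable one_ne_zero).differentiableAt
  set D : N → (V →L[ℂ] V) := fun n => fderiv ℝ (Proj n) φ v with hDdef
  set P : N → (V →L[ℂ] V) := fun n => Proj n φ with hPdef
  -- derivative of the idempotency relation
  have hD : ∀ n, D n = D n * P n + P n * D n := by
    intro n
    have h0 : (fun x => Proj n x * Proj n x) = Proj n := funext (hidem n)
    have h1 := congrArg (fun f => fderiv ℝ f φ) h0
    beta_reduce at h1
    rw [fderiv_fun_mul' (hdiff n) (hdiff n)] at h1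
    have h2 := congrArg (fun L => L v) h1
    simp only [ContinuousLinearMap.add_apply, ContinuousLinearMap.smul_apply,
      ContinuousLinearMap.smulRight_apply, smul_eq_mul, op_smul_eq_mul] at h2
    exact h2.symm.trans (add_comm _ _)
  -- derivative of orthogonality
  have hDo : ∀ n m, n ≠ m → D n * P m + P n * D m = 0 := by
    intro n m hnm
    have h0 : (fun x => Proj n x * Proj m x) = fun _ => (0 : V →L[ℂ] V) :=
      funext (horth n m hnm)
    have h1 := congrArg (fun f => fderiv ℝ f φ) h0
    beta_reduce at h1
    rw [fderiv_fun_mul' (hdiff n) (hdiff m), fderiv_fun_const] at h1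
    have h2 := congrArg (fun L => L v) h1
    simp only [ContinuousLinearMap.add_apply, ContinuousLinearMap.smul_apply,
      ContinuousLinearMap.smulRight_apply, smul_eq_mul, op_smul_eq_mul,
      ContinuousLinearMap.zero_apply, Pi.zero_apply] at h2
    exact (add_comm _ _).trans h2
  -- derivative of the partial sum
  have hfd : fderiv ℝ PiS φ v = ∑ m ∈ S, D m := by
    have h0 : PiS = fun x => ∑ m ∈ S, Proj m x := funext hPiS
    rw [h0, fderiv_fun_sum (fun m _ => hdiff m)]
    simp [ContinuousLinearMap.sum_apply, hDdef]
  have hkey := kato_key P D (fun n => hidem n φ) (fun n m h => horth n m h φ)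
    (hsum φ) hD hDo S
  rw [hfd, hA, hPiS]
  have hT : (∑ n, (fderiv ℝ (Proj n) φ (EuclideanSpace.single μ 1) * Proj n φ
      - Proj n φ * fderiv ℝ (Proj n) φ (EuclideanSpace.single μ 1)))
      = ∑ n, (D n * P n - P n * D n) := rfl
  rw [hT]
  rw [smul_mul_assoc, mul_smul_comm, ← smul_sub, smul_smul, hkey]
  rw [smul_add, ← add_smul]
  have hs : -Complex.I * (Complex.I / 2) + -Complex.I * (Complex.I / 2) = 1 := by
    linear_combination -Complex.I_mul_I
  rw [hs, one_smul]
end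

section
/- Let V be a finite-dimensional complex inner product space, {Π^n(φ)}_{n∈N} a continuously differentiable family of self-adjoint idempotents on V with Π^nΠ^m = 0 for n ≠ m and Σ_n Π^n = 1 at every φ ∈ ℝ^d, and A_μ(φ) = (i/2) Σ_n [∂_μΠ^n(φ), Π^n(φ)] the Kato gauge potential. Let H₀ : ℝ^d → End(V) be a family of operators with [H₀(φ), Π^n(φ)] = 0 for all n and φ. Let φ_t : ℝ → ℝ^d be continuously differentiable, and let ψ : ℝ → V be differentiable and satisfy the Schrödinger equation i ψ'(t) = (H₀(φ_t) + Σ_μ (dφ_t^μ/dt) A_μ(φ_t)) ψ(t) for all t, where all the operator families are continuous in t along the trajectory. Fix n ∈ N. If Π^n(φ_0) ψ(0) = ψ(0), then Π^n(φ_t) ψ(t) = ψ(t) for all t ≥ 0. -/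
set_option synthInstance.maxHeartbeats 1000000
set_option maxHeartbeats 4000000

private lemma kato_comm_ne' {R : Type*} [Ring R] (a a' b b' : R)
    (haa : a * a = a) (hab : a * b = 0) (hba : b * a = 0)
    (h1 : a' * b + a * b' = 0) (h2 : b' * a + b * a' = 0) :
    (a' * a - a * a') * b - b * (a' * a - a * a') = a * b' + b' * a := by
  have h1' : a' * b = -(a * b') := eq_neg_of_add_eq_zero_left h1
  have h2' : b * a' = -(b' * a) := eq_neg_of_add_eq_zero_right h2
  calc (a' * a - a * a') * b - b * (a' * a - a * a')
      = a' * (a * b) - a * (a' * b) - (b * a') * a + (b * a) * a' := by noncomm_ring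
    _ = a' * 0 - a * (-(a * b')) - (-(b' * a)) * a + 0 * a' := by rw [hab, hba, h1', h2']
    _ = (a * a) * b' + b' * (a * a) := by noncomm_ring
    _ = a * b' + b' * a := by rw [haa]

private lemma kato_comm_eq' {R : Type*} [Ring R] (b b' : R)
    (hbb : b * b = b) (h : b' * b + b * b' = b') :
    (b' * b - b * b') * b - b * (b' * b - b * b') = b * b' + b' * b := by
  have h4 : b * b' * b = b * b' * b + b * b' * b := by
    calc b * b' * b = b * (b' * b + b * b') * b := by rw [h]
      _ = b * b' * (b * b) + (b * b) * (b' * b) := by noncomm_ring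
      _ = b * b' * b + b * b' * b := by rw [hbb]; noncomm_ring
  have hX : b * b' * b = 0 := by
    have h5 : b * b' * b + 0 = b * b' * b + b * b' * b := by rw [add_zero]; exact h4
    exact (add_left_cancel h5).symm
  calc (b' * b - b * b') * b - b * (b' * b - b * b')
      = b' * (b * b) - (b * b' * b) - (b * b' * b) + (b * b) * b' := by noncomm_ring
    _ = b' * b - 0 - 0 + b * b' := by rw [hbb, hX]
    _ = b * b' + b' * b := by noncomm_ring

private lemma kato_comm' {R : Type*} [Ring R] {N : Type*} [Fintype N] [DecidableEq N]
    (P P' : N → R) (n : N)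
    (hmul : ∀ m k, P m * P k = if m = k then P m else 0)
    (hD : ∀ m k, P' m * P k + P m * P' k = if m = k then P' m else 0)
    (hsum : ∑ m, P m = 1) :
    (∑ m, (P' m * P m - P m * P' m)) * P n
      - P n * ∑ m, (P' m * P m - P m * P' m) = P' n + P' n := by
  rw [Finset.sum_mul, Finset.mul_sum, ← Finset.sum_sub_distrib]
  have key : ∀ m ∈ Finset.univ, (P' m * P m - P m * P' m) * P n
      - P n * (P' m * P m - P m * P' m) = P m * P' n + P' n * P m := by
    intro m _
    by_cases hmn : m = n
    · subst hmn
      have hbb : P m * P m = P m := by simpa using hmul m m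
      have h : P' m * P m + P m * P' m = P' m := by simpa using hD m m
      exact kato_comm_eq' (P m) (P' m) hbb h
    · have haa : P m * P m = P m := by simpa using hmul m m
      have hab : P m * P n = 0 := by simpa [hmn] using hmul m n
      have hba : P n * P m = 0 := by simpa [Ne.symm hmn] using hmul n m
      have h1 : P' m * P n + P m * P' n = 0 := by simpa [hmn] using hD m n
      have h2 : P' n * P m + P n * P' m = 0 := by simpa [Ne.symm hmn] using hD n m
      exact kato_comm_ne' (P m) (P' m) (P n) (P' n) haa hab hba h1 h2
  rw [Finset.sum_congr rfl key, Finset.sum_add_distrib, ← Finset.sum_mul, ← Finset.mul_sum,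
    hsum, one_mul, mul_one]

/-- Theorem 2 of the supplement, transitionless driving.
If `ψ` solves the Schrödinger equation `i ψ' = (H₀(φ_t) + Σ_μ φ̇_t^μ A_μ(φ_t)) ψ`
with the Kato gauge potential as counterdiabatic term, `[H₀, Π^n] = 0`, and
`ψ(0)` lies in the range of `Π^n(φ_0)`, then `Π^n(φ_t) ψ(t) = ψ(t)` for all
`t ≥ 0`. -/
theorem transitionless_drive_preserves_eigenspace
    {V : Type*} [NormedAddCommGroup V] [InnerProductSpace ℂ V] [FiniteDimensional ℂ V]
    {d : ℕ} {N : Type*} [Fintype N]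
    (Proj : N → EuclideanSpace ℝ (Fin d) → (V →L[ℂ] V))
    (hC1 : ∀ n, ContDiff ℝ 1 (Proj n))
    (hsa : ∀ n φ, IsSelfAdjoint (Proj n φ))
    (hidem : ∀ n φ, Proj n φ * Proj n φ = Proj n φ)
    (horth : ∀ n m, n ≠ m → ∀ φ, Proj n φ * Proj m φ = 0)
    (hsum : ∀ φ, ∑ n, Proj n φ = 1)
    (A : Fin d → EuclideanSpace ℝ (Fin d) → (V →L[ℂ] V))
    (hA : ∀ μ φ, A μ φ = (Complex.I / 2) • ∑ n,
      (fderiv ℝ (Proj n) φ (EuclideanSpace.single μ 1) * Proj n φ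
        - Proj n φ * fderiv ℝ (Proj n) φ (EuclideanSpace.single μ 1)))
    (H₀ : EuclideanSpace ℝ (Fin d) → (V →L[ℂ] V))
    (hcomm : ∀ n φ, H₀ φ * Proj n φ = Proj n φ * H₀ φ)
    (φt : ℝ → EuclideanSpace ℝ (Fin d)) (hφt : ContDiff ℝ 1 φt)
    (hH₀cont : Continuous fun t => H₀ (φt t))
    (ψ : ℝ → V)
    (hψ : ∀ t : ℝ, HasDerivAt ψ
      ((-Complex.I) • ((H₀ (φt t)
          + ∑ μ, (deriv (fun s => φt s μ) t) • A μ (φt t)) (ψ t))) t)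
    (n : N)
    (h0 : Proj n (φt 0) (ψ 0) = ψ 0) :
    ∀ t : ℝ, 0 ≤ t → Proj n (φt t) (ψ t) = ψ t := by
  classical
  have hφd : ∀ t, HasDerivAt φt (deriv φt t) t :=
    fun t => ((hφt.differentiable one_ne_zero) t).hasDerivAt
  set Q : N → ℝ → (V →L[ℂ] V) := fun m t => Proj m (φt t) with hQdef
  set D : N → ℝ → (V →L[ℂ] V) := fun m t => fderiv ℝ (Proj m) (φt t) (deriv φt t) with hDdef
  have hQd : ∀ m t, HasDerivAt (Q m) (D m t) t := by
    intro m t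
    exact (((hC1 m).differentiable one_ne_zero) (φt t)).hasFDerivAt.comp_hasDerivAt t (hφd t)
  have hQmul : ∀ m k t, Q m t * Q k t = if m = k then Q m t else 0 := by
    intro m k t
    by_cases hmk : m = k
    · subst hmk; simp [hQdef, hidem]
    · simp [hQdef, hmk, horth m k hmk]
  have hDrel : ∀ m k t, D m t * Q k t + Q m t * D k t = if m = k then D m t else 0 := by
    intro m k t
    have hprod : HasDerivAt (fun s => Q m s * Q k s) (D m t * Q k t + Q m t * D k t) t :=
      (hQd m t).mul (hQd k t)
    by_cases hmk : m = k
    · subst hmk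
      have he : (fun s => Q m s * Q m s) = Q m := funext fun s => hidem m (φt s)
      rw [he] at hprod
      simpa using hprod.unique (hQd m t)
    · have he : (fun s => Q m s * Q k s) = fun _ => 0 := funext fun s => horth m k hmk (φt s)
      rw [he] at hprod
      simpa [hmk] using hprod.unique (hasDerivAt_const t (0 : V →L[ℂ] V))
  have hcompd : ∀ (μ : Fin d) t, HasDerivAt (fun s => φt s μ) (deriv φt t μ) t := by
    intro μ t
    have := (EuclideanSpace.proj μ : EuclideanSpace ℝ (Fin d) →L[ℝ] ℝ).hasFDerivAt.comp_hasDerivAt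
      t (hφd t)
    exact this
  -- the counterdiabatic sum in terms of D and Q
  have hAsum : ∀ (w : EuclideanSpace ℝ (Fin d)) (L : N → EuclideanSpace ℝ (Fin d) →L[ℝ] (V →L[ℂ] V))
      (Qv : N → (V →L[ℂ] V)),
      ∑ μ, w μ • ((Complex.I / 2) • ∑ m, (L m (EuclideanSpace.single μ 1) * Qv m
        - Qv m * L m (EuclideanSpace.single μ 1)))
      = (Complex.I / 2) • ∑ m, (L m w * Qv m - Qv m * L m w) := by
    intro w L Qv
    have hxd : ∑ μ, w μ • (EuclideanSpace.single μ 1 : EuclideanSpace ℝ (Fin d)) = w := by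
      simpa [EuclideanSpace.basisFun_apply, EuclideanSpace.basisFun_repr] using
        (EuclideanSpace.basisFun (Fin d) ℝ).sum_repr w
    have step : ∀ m : N, ∑ μ, w μ • (L m (EuclideanSpace.single μ 1) * Qv m
        - Qv m * L m (EuclideanSpace.single μ 1)) = L m w * Qv m - Qv m * L m w := by
      intro m
      have hLw : ∑ μ, w μ • L m (EuclideanSpace.single μ 1) = L m w := by
        rw [← hxd, map_sum]
        simp [map_smul, hxd]
      rw [← hLw, Finset.sum_mul, Finset.mul_sum, ← Finset.sum_sub_distrib]
      refine Finset.sum_congr rfl fun μ _ => ?_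
      rw [smul_sub, smul_mul_assoc, mul_smul_comm]
    calc ∑ μ, w μ • ((Complex.I / 2) • ∑ m, (L m (EuclideanSpace.single μ 1) * Qv m
          - Qv m * L m (EuclideanSpace.single μ 1)))
        = ∑ μ, ∑ m, (Complex.I / 2) • (w μ • (L m (EuclideanSpace.single μ 1) * Qv m
          - Qv m * L m (EuclideanSpace.single μ 1))) := by
          refine Finset.sum_congr rfl fun μ _ => ?_
          rw [smul_comm (w μ), Finset.smul_sum, Finset.smul_sum]
      _ = ∑ m, ∑ μ, (Complex.I / 2) • (w μ • (L m (EuclideanSpace.single μ 1) * Qv m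
          - Qv m * L m (EuclideanSpace.single μ 1))) := Finset.sum_comm
      _ = (Complex.I / 2) • ∑ m, ∑ μ, w μ • (L m (EuclideanSpace.single μ 1) * Qv m
          - Qv m * L m (EuclideanSpace.single μ 1)) := by
          rw [Finset.smul_sum]
          exact Finset.sum_congr rfl fun m _ => (Finset.smul_sum).symm
      _ = (Complex.I / 2) • ∑ m, (L m w * Qv m - Qv m * L m w) := by
          rw [Finset.sum_congr rfl fun m _ => step m]
  have hEt : ∀ t, (∑ μ, (deriv (fun s => φt s μ) t) • A μ (φt t))
      = (Complex.I / 2) • ∑ m, (D m t * Q m t - Q m t * D m t) := by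
    intro t
    have h1 : ∀ μ : Fin d, (deriv (fun s => φt s μ) t) • A μ (φt t)
        = (deriv φt t μ) • ((Complex.I / 2) • ∑ m,
          ((fderiv ℝ (Proj m) (φt t)) (EuclideanSpace.single μ 1) * Q m t
            - Q m t * (fderiv ℝ (Proj m) (φt t)) (EuclideanSpace.single μ 1))) := by
      intro μ
      rw [(hcompd μ t).deriv, hA]
    rw [Finset.sum_congr rfl fun μ _ => h1 μ]
    exact hAsum (deriv φt t) (fun m => fderiv ℝ (Proj m) (φt t)) (fun m => Q m t)
  -- commutator identity
  have hkey : ∀ t, (H₀ (φt t) + ∑ μ, (deriv (fun s => φt s μ) t) • A μ (φt t)) * Q n t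
      - Q n t * (H₀ (φt t) + ∑ μ, (deriv (fun s => φt s μ) t) • A μ (φt t))
      = Complex.I • D n t := by
    intro t
    have hk := kato_comm' (fun m => Q m t) (fun m => D m t) n (fun m k => hQmul m k t)
      (fun m k => hDrel m k t) (by simpa [hQdef] using hsum (φt t))
    rw [hEt t, add_mul, mul_add, hcomm n (φt t)]
    have : (Complex.I / 2) • (∑ m, (D m t * Q m t - Q m t * D m t)) * Q n t
        - Q n t * ((Complex.I / 2) • ∑ m, (D m t * Q m t - Q m t * D m t))
        = Complex.I • D n t := by
      rw [smul_mul_assoc, mul_smul_comm, ← smul_sub, hk, smul_add, ← add_smul]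
      congr 1
      ring
    calc Q n t * H₀ (φt t) + (Complex.I / 2) • (∑ m, (D m t * Q m t - Q m t * D m t)) * Q n t
          - (Q n t * H₀ (φt t) + Q n t * ((Complex.I / 2) • ∑ m, (D m t * Q m t - Q m t * D m t)))
        = (Complex.I / 2) • (∑ m, (D m t * Q m t - Q m t * D m t)) * Q n t
          - Q n t * ((Complex.I / 2) • ∑ m, (D m t * Q m t - Q m t * D m t)) := by abel
      _ = Complex.I • D n t := this
  -- the deviation u and its ODE
  set E : ℝ → (V →L[ℂ] V) := fun t => H₀ (φt t)
      + ∑ μ, (deriv (fun s => φt s μ) t) • A μ (φt t) with hEdef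
  set u : ℝ → V := fun t => Q n t (ψ t) - ψ t with hudef
  have hu : ∀ t, HasDerivAt u ((-Complex.I) • (E t (u t))) t := by
    intro t
    have h1 : HasDerivAt (fun s => Q n s (ψ s))
        (D n t (ψ t) + Q n t ((-Complex.I) • (E t (ψ t)))) t := by
      have hR : HasDerivAt (fun s => (Q n s).restrictScalars ℝ)
          ((D n t).restrictScalars ℝ) t :=
        (ContinuousLinearMap.restrictScalarsL ℂ V V ℝ ℝ).hasFDerivAt.comp_hasDerivAt t (hQd n t)
      have := hR.clm_apply (hψ t)
      simpa only [ContinuousLinearMap.coe_restrictScalars'] using this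
    have h2 := h1.sub (hψ t)
    convert h2 using 1
    · rfl
    have happ : E t (Q n t (ψ t)) - Q n t (E t (ψ t)) = Complex.I • D n t (ψ t) := by
      have h := congrArg (fun T : V →L[ℂ] V => T (ψ t)) (hkey t)
      simp only [ContinuousLinearMap.sub_apply, ContinuousLinearMap.mul_apply,
        ContinuousLinearMap.smul_apply] at h
      exact h
    have hD' : D n t (ψ t) = (-Complex.I) • (E t (Q n t (ψ t)) - Q n t (E t (ψ t))) := by
      rw [happ, smul_smul]
      norm_num
    rw [hudef]
    simp only [map_sub, smul_sub, map_smul, hD']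
    module
  -- continuity of the coefficient operator
  have hEcont : Continuous E := by
    rw [hEdef]
    refine hH₀cont.add ?_
    refine continuous_finset_sum _ fun μ _ => ?_
    have hderivμ : Continuous fun t => deriv (fun s => φt s μ) t := by
      have : (fun t => deriv (fun s => φt s μ) t) = fun t => deriv φt t μ :=
        funext fun t => (hcompd μ t).deriv
      rw [this]
      exact (EuclideanSpace.proj μ :
        EuclideanSpace ℝ (Fin d) →L[ℝ] ℝ).continuous.comp (hφt.continuous_deriv le_rfl)
    have hAcont : Continuous fun t => A μ (φt t) := by
      have hform : (fun t => A μ (φt t)) = fun t => (Complex.I / 2) • ∑ m,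
          ((fderiv ℝ (Proj m) (φt t)) (EuclideanSpace.single μ 1) * Q m t
            - Q m t * (fderiv ℝ (Proj m) (φt t)) (EuclideanSpace.single μ 1)) :=
        funext fun t => hA μ (φt t)
      rw [hform]
      refine Continuous.fun_const_smul ?_ _
      refine continuous_finset_sum _ fun m _ => Continuous.sub ?_ ?_
      · exact (Continuous.clm_apply (((hC1 m).continuous_fderiv one_ne_zero).comp hφt.continuous)
          continuous_const).mul ((hC1 m).continuous.comp hφt.continuous)
      · exact ((hC1 m).continuous.comp hφt.continuous).mul
          (Continuous.clm_apply (((hC1 m).continuous_fderiv one_ne_zero).comp hφt.continuous)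
            continuous_const)
    exact hderivμ.smul hAcont
  have hMcont : Continuous fun t => (-Complex.I) • E t := hEcont.fun_const_smul _
  have hucont : Continuous u := by
    refine continuous_iff_continuousAt.2 fun t => (hu t).differentiableAt.continuousAt
  -- Gronwall
  intro T hT
  obtain ⟨C, hC⟩ := (isCompact_Icc (a := (0:ℝ)) (b := T)).exists_bound_of_continuousOn
    hMcont.continuousOn
  have hgron := norm_le_gronwallBound_of_norm_deriv_right_le
    (f := u) (f' := fun t => ((-Complex.I) • E t) (u t)) (δ := 0) (K := C) (ε := 0)
    (a := 0) (b := T) hucont.continuousOn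
    (fun x _ => by
      have := hu x
      simpa [ContinuousLinearMap.smul_apply] using this.hasDerivWithinAt)
    (by simp [hudef, h0, hQdef])
    (fun x hx => by
      have h1 : ‖((-Complex.I) • E x) (u x)‖ ≤ ‖(-Complex.I) • E x‖ * ‖u x‖ :=
        ContinuousLinearMap.le_opNorm _ _
      have h2 : ‖(-Complex.I) • E x‖ ≤ C := hC x (Set.Ico_subset_Icc_self hx)
      calc ‖((-Complex.I) • E x) (u x)‖ ≤ ‖(-Complex.I) • E x‖ * ‖u x‖ := h1
        _ ≤ C * ‖u x‖ := mul_le_mul_of_nonneg_right h2 (norm_nonneg _)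
        _ = C * ‖u x‖ + 0 := by ring)
  have hbT := hgron T (Set.right_mem_Icc.2 hT)
  rw [gronwallBound_ε0] at hbT
  simp only [zero_mul] at hbT
  have huT : u T = 0 := norm_le_zero_iff.1 hbT
  have : Q n T (ψ T) - ψ T = 0 := huT
  have := sub_eq_zero.1 this
  simpa [hQdef] using this
end

section
/- Let V be a finite-dimensional complex inner product space, {Π^n(φ)}_{n∈N} a twice continuously differentiable family of self-adjoint idempotents on V with Π^nΠ^m = 0 for n ≠ m and Σ_n Π^n = 1 at every φ ∈ ℝ^d, and A_μ(φ) = (i/2) Σ_n [∂_μΠ^n(φ), Π^n(φ)] the Kato gauge potential. For a subset S ⊆ N set Π(φ) = Σ_{m∈S} Π^m(φ), define the subspace-projected potential A_ν^{(Π)}(φ) = Π(φ) A_ν(φ) Π(φ) and the non-abelian Berry curvature 𝔉_{μν}^{(Π)}(φ) = i Π(φ) [∂_μΠ(φ), ∂_νΠ(φ)] Π(φ). Then for all directions μ, ν and all φ: Π(φ) (∂_μ A_ν(φ)) Π(φ) = Π(φ) (∂_μ A_ν^{(Π)}(φ)) Π(φ) − 𝔉_{μν}^{(Π)}(φ). 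-/
open Complex

private lemma kato_alg {A : Type*} [Ring A] [Algebra ℂ A] (p a b pm pn : A) (hp : p * p = p)
    (hpm : Complex.I • pm = a * p - p * a) (hpn : Complex.I • pn = b * p - p * b) :
    p * pm * b * p + p * b * pm * p
      = Complex.I • (p * (pm * pn - pn * pm) * p) := by
  have hpm' : pm = -Complex.I • (a * p - p * a) := by
    rw [← hpm, smul_smul]; simp [Complex.I_mul_I]
  have hpn' : pn = -Complex.I • (b * p - p * b) := by
    rw [← hpn, smul_smul]; simp [Complex.I_mul_I]
  have hp2 : ∀ x : A, p * (p * x) = p * x := fun x => by rw [← mul_assoc, hp]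
  subst hpm' hpn'
  simp only [smul_mul_assoc, mul_smul_comm, smul_smul, smul_sub, sub_mul, mul_sub,
    neg_mul, mul_neg, neg_neg, Complex.I_mul_I, neg_smul, one_smul, mul_assoc, hp, hp2]
  match_scalars <;> simp [pow_succ, Complex.I_mul_I]

set_option maxHeartbeats 2000000 in
set_option synthInstance.maxHeartbeats 400000 in
/-- Theorem 4 of the supplement. With `Π(φ) = Σ_{m∈S} Π^m(φ)`,
the subspace-projected Kato potential `A_ν^{(Π)} = Π A_ν Π`, and the
non-abelian Berry curvature `𝔉_{μν}^{(Π)} = i Π[∂_μΠ, ∂_νΠ]Π`, one has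
`Π (∂_μ A_ν) Π = Π (∂_μ A_ν^{(Π)}) Π − 𝔉_{μν}^{(Π)}`. -/
theorem projected_derivative_of_kato_potential
    {V : Type*} [NormedAddCommGroup V] [InnerProductSpace ℂ V] [FiniteDimensional ℂ V]
    {d : ℕ} {N : Type*} [Fintype N]
    (Proj : N → EuclideanSpace ℝ (Fin d) → (V →L[ℂ] V))
    (hC2 : ∀ n, ContDiff ℝ 2 (Proj n))
    (hsa : ∀ n φ, IsSelfAdjoint (Proj n φ))
    (hidem : ∀ n φ, Proj n φ * Proj n φ = Proj n φ)
    (horth : ∀ n m, n ≠ m → ∀ φ, Proj n φ * Proj m φ = 0)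
    (hsum : ∀ φ, ∑ n, Proj n φ = 1)
    (A : Fin d → EuclideanSpace ℝ (Fin d) → (V →L[ℂ] V))
    (hA : ∀ μ φ, A μ φ = (Complex.I / 2) • ∑ n,
      (fderiv ℝ (Proj n) φ (EuclideanSpace.single μ 1) * Proj n φ
        - Proj n φ * fderiv ℝ (Proj n) φ (EuclideanSpace.single μ 1)))
    (S : Finset N)
    (PiS : EuclideanSpace ℝ (Fin d) → (V →L[ℂ] V))
    (hPiS : ∀ φ, PiS φ = ∑ m ∈ S, Proj m φ)
    (AProj : Fin d → EuclideanSpace ℝ (Fin d) → (V →L[ℂ] V))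
    (hAProj : ∀ ν φ, AProj ν φ = PiS φ * A ν φ * PiS φ)
    (F : Fin d → Fin d → EuclideanSpace ℝ (Fin d) → (V →L[ℂ] V))
    (hF : ∀ μ ν φ, F μ ν φ = Complex.I • (PiS φ *
      (fderiv ℝ PiS φ (EuclideanSpace.single μ 1) * fderiv ℝ PiS φ (EuclideanSpace.single ν 1)
        - fderiv ℝ PiS φ (EuclideanSpace.single ν 1) * fderiv ℝ PiS φ (EuclideanSpace.single μ 1))
      * PiS φ))
    (μ ν : Fin d) (φ : EuclideanSpace ℝ (Fin d)) :
    PiS φ * fderiv ℝ (A ν) φ (EuclideanSpace.single μ 1) * PiS φ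
      = PiS φ * fderiv ℝ (AProj ν) φ (EuclideanSpace.single μ 1) * PiS φ - F μ ν φ := by
  classical
  -- basic differentiability
  have hdiff : ∀ n, Differentiable ℝ (Proj n) := fun n => (hC2 n).differentiable (by norm_num)
  have hPdiff : ∀ n, HasFDerivAt (Proj n) (fderiv ℝ (Proj n) φ) φ :=
    fun n => (hdiff n φ).hasFDerivAt
  -- derivative of PiS
  have hPiS_sum : HasFDerivAt PiS (∑ m ∈ S, fderiv ℝ (Proj m) φ) φ := by
    have heq : PiS = fun ψ => ∑ m ∈ S, Proj m ψ := funext hPiS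
    rw [heq]
    exact HasFDerivAt.fun_sum (fun m _ => hPdiff m)
  have hpDsum : fderiv ℝ PiS φ = ∑ m ∈ S, fderiv ℝ (Proj m) φ := hPiS_sum.fderiv
  -- A is C¹
  have hAc : ∀ κ, ContDiff ℝ 1 (A κ) := by
    intro κ
    have heq : A κ = fun ψ => (Complex.I / 2) • ∑ n,
        (fderiv ℝ (Proj n) ψ (EuclideanSpace.single κ 1) * Proj n ψ
          - Proj n ψ * fderiv ℝ (Proj n) ψ (EuclideanSpace.single κ 1)) := funext (hA κ)
    rw [heq]
    refine ContDiff.const_smul _ (ContDiff.sum fun n _ => ?_)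
    have h1 : ContDiff ℝ 1 fun ψ => fderiv ℝ (Proj n) ψ (EuclideanSpace.single κ 1) :=
      ((hC2 n).fderiv_right (by norm_num)).clm_apply contDiff_const
    have h2 : ContDiff ℝ 1 (Proj n) := (hC2 n).of_le one_le_two
    exact (h1.mul h2).sub (h2.mul h1)
  have hb : HasFDerivAt (A ν) (fderiv ℝ (A ν) φ) φ :=
    (((hAc ν).differentiable (by norm_num)) φ).hasFDerivAt
  -- Leibniz identity from idempotency
  have f1 : ∀ (κ : Fin d) (n : N),
      fderiv ℝ (Proj n) φ (EuclideanSpace.single κ 1)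
        = Proj n φ * fderiv ℝ (Proj n) φ (EuclideanSpace.single κ 1)
          + fderiv ℝ (Proj n) φ (EuclideanSpace.single κ 1) * Proj n φ := by
    intro κ n
    have h1 : HasFDerivAt (Proj n)
        (Proj n φ • fderiv ℝ (Proj n) φ + (fderiv ℝ (Proj n) φ).smulRight (Proj n φ)) φ := by
      have h := (hPdiff n).mul' (hPdiff n)
      have heq : (fun ψ => Proj n ψ * Proj n ψ) = Proj n := funext (hidem n)
      exact (show HasFDerivAt (fun ψ => Proj n ψ * Proj n ψ) _ φ from h.congr_fderiv (ContinuousLinearMap.ext fun v => by simp [ContinuousLinearMap.smulRight_apply, op_smul_eq_mul])).congr_of_eventuallyEq (by rw [heq])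
    have h2 := h1.unique (hPdiff n)
    have h3 := DFunLike.congr_fun h2.symm (EuclideanSpace.single κ 1)
    simpa [ContinuousLinearMap.smulRight_apply, smul_eq_mul] using h3
  -- Leibniz identity from orthogonality
  have f2 : ∀ (κ : Fin d) (n k : N), n ≠ k →
      Proj n φ * fderiv ℝ (Proj k) φ (EuclideanSpace.single κ 1)
        + fderiv ℝ (Proj n) φ (EuclideanSpace.single κ 1) * Proj k φ = 0 := by
    intro κ n k hnk
    have h1 : HasFDerivAt (fun ψ => Proj n ψ * Proj k ψ)
        (Proj n φ • fderiv ℝ (Proj k) φ + (fderiv ℝ (Proj n) φ).smulRight (Proj k φ)) φ :=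
      ((hPdiff n).mul' (hPdiff k)).congr_fderiv (ContinuousLinearMap.ext fun v => by simp [ContinuousLinearMap.smulRight_apply, op_smul_eq_mul])
    have h2 : HasFDerivAt (fun ψ => Proj n ψ * Proj k ψ)
        (0 : EuclideanSpace ℝ (Fin d) →L[ℝ] (V →L[ℂ] V)) φ := by
      have heq : (fun ψ => Proj n ψ * Proj k ψ) = fun _ => (0 : V →L[ℂ] V) :=
        funext (horth n k hnk)
      rw [heq]; exact hasFDerivAt_const 0 φ
    have h3 := h1.unique h2
    have h4 := DFunLike.congr_fun h3 (EuclideanSpace.single κ 1)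
    simpa [ContinuousLinearMap.smulRight_apply, smul_eq_mul] using h4
  -- PiS is idempotent
  have hp : PiS φ * PiS φ = PiS φ := by
    rw [hPiS φ, Finset.sum_mul_sum]
    refine Finset.sum_congr rfl fun m hm => ?_
    rw [Finset.sum_eq_single_of_mem m hm (fun k _ hkm => horth m k (Ne.symm hkm) φ), hidem]
  -- Π D Π = 0
  have hzero : ∀ (κ : Fin d) (k : N),
      Proj k φ * fderiv ℝ (Proj k) φ (EuclideanSpace.single κ 1) * Proj k φ = 0 := by
    intro κ k
    have h1 := f1 κ k
    have hl : ∀ x : V →L[ℂ] V, Proj k φ * (Proj k φ * x) = Proj k φ * x :=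
      fun x => by rw [← mul_assoc, hidem k φ]
    have h2 : Proj k φ * (fderiv ℝ (Proj k) φ (EuclideanSpace.single κ 1) * Proj k φ)
        = Proj k φ * (fderiv ℝ (Proj k) φ (EuclideanSpace.single κ 1) * Proj k φ)
          + Proj k φ * (fderiv ℝ (Proj k) φ (EuclideanSpace.single κ 1) * Proj k φ) := by
      conv_lhs => rw [h1]
      simp only [mul_add, add_mul, mul_assoc, hl, hidem k φ]
    rw [mul_assoc]
    exact left_eq_add.mp h2
  -- key commutator identity : [A_κ, Π_k] = I • ∂_κ Π_k
  have comm_k : ∀ (κ : Fin d) (k : N),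
      A κ φ * Proj k φ - Proj k φ * A κ φ
        = Complex.I • fderiv ℝ (Proj k) φ (EuclideanSpace.single κ 1) := by
    intro κ k
    have hGsum : ∑ n, ((fderiv ℝ (Proj n) φ (EuclideanSpace.single κ 1) * Proj n φ
          - Proj n φ * fderiv ℝ (Proj n) φ (EuclideanSpace.single κ 1)) * Proj k φ
        - Proj k φ * (fderiv ℝ (Proj n) φ (EuclideanSpace.single κ 1) * Proj n φ
          - Proj n φ * fderiv ℝ (Proj n) φ (EuclideanSpace.single κ 1)))
        = fderiv ℝ (Proj k) φ (EuclideanSpace.single κ 1)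
          + fderiv ℝ (Proj k) φ (EuclideanSpace.single κ 1) := by
      rw [← Finset.add_sum_erase _ _ (Finset.mem_univ k)]
      have hGk : (fderiv ℝ (Proj k) φ (EuclideanSpace.single κ 1) * Proj k φ
            - Proj k φ * fderiv ℝ (Proj k) φ (EuclideanSpace.single κ 1)) * Proj k φ
          - Proj k φ * (fderiv ℝ (Proj k) φ (EuclideanSpace.single κ 1) * Proj k φ
            - Proj k φ * fderiv ℝ (Proj k) φ (EuclideanSpace.single κ 1))
          = fderiv ℝ (Proj k) φ (EuclideanSpace.single κ 1) := by
        rw [sub_mul, mul_sub, mul_assoc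
          (fderiv ℝ (Proj k) φ (EuclideanSpace.single κ 1)) (Proj k φ) (Proj k φ), hidem k φ]
        rw [show Proj k φ * fderiv ℝ (Proj k) φ (EuclideanSpace.single κ 1) * Proj k φ = 0
          from hzero κ k]
        rw [show Proj k φ * (fderiv ℝ (Proj k) φ (EuclideanSpace.single κ 1) * Proj k φ) = 0 by
          rw [← mul_assoc]; exact hzero κ k]
        rw [← mul_assoc, hidem k φ, sub_zero, zero_sub, sub_neg_eq_add, add_comm]
        exact (f1 κ k).symm
      have hGn : ∀ n ∈ Finset.univ.erase k,
          (fderiv ℝ (Proj n) φ (EuclideanSpace.single κ 1) * Proj n φ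
            - Proj n φ * fderiv ℝ (Proj n) φ (EuclideanSpace.single κ 1)) * Proj k φ
          - Proj k φ * (fderiv ℝ (Proj n) φ (EuclideanSpace.single κ 1) * Proj n φ
            - Proj n φ * fderiv ℝ (Proj n) φ (EuclideanSpace.single κ 1))
          = Proj n φ * fderiv ℝ (Proj k) φ (EuclideanSpace.single κ 1)
            + fderiv ℝ (Proj k) φ (EuclideanSpace.single κ 1) * Proj n φ := by
        intro n hn
        have hnk : n ≠ k := Finset.ne_of_mem_erase hn
        have o1 : Proj n φ * Proj k φ = 0 := horth n k hnk φ
        have o2 : Proj k φ * Proj n φ = 0 := horth k n hnk.symm φ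
        have e1 : fderiv ℝ (Proj n) φ (EuclideanSpace.single κ 1) * Proj k φ
            = -(Proj n φ * fderiv ℝ (Proj k) φ (EuclideanSpace.single κ 1)) :=
          eq_neg_of_add_eq_zero_right (f2 κ n k hnk)
        have e2 : Proj k φ * fderiv ℝ (Proj n) φ (EuclideanSpace.single κ 1)
            = -(fderiv ℝ (Proj k) φ (EuclideanSpace.single κ 1) * Proj n φ) :=
          eq_neg_of_add_eq_zero_left (f2 κ k n hnk.symm)
        have t1 : fderiv ℝ (Proj n) φ (EuclideanSpace.single κ 1) * Proj n φ * Proj k φ = 0 := by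
          rw [mul_assoc, o1, mul_zero]
        have t2 : Proj n φ * fderiv ℝ (Proj n) φ (EuclideanSpace.single κ 1) * Proj k φ
            = -(Proj n φ * fderiv ℝ (Proj k) φ (EuclideanSpace.single κ 1)) := by
          rw [mul_assoc, e1, mul_neg, ← mul_assoc, hidem n φ]
        have t3 : Proj k φ * (fderiv ℝ (Proj n) φ (EuclideanSpace.single κ 1) * Proj n φ)
            = -(fderiv ℝ (Proj k) φ (EuclideanSpace.single κ 1) * Proj n φ) := by
          rw [← mul_assoc, e2, neg_mul, mul_assoc, hidem n φ]
        have t4 : Proj k φ * (Proj n φ * fderiv ℝ (Proj n) φ (EuclideanSpace.single κ 1)) = 0 := by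
          rw [← mul_assoc, o2, zero_mul]
        rw [sub_mul, mul_sub, t1, t2, t3, t4]
        abel
      rw [hGk, Finset.sum_congr rfl hGn, Finset.sum_add_distrib, ← Finset.sum_mul,
        ← Finset.mul_sum]
      have hse : ∑ n ∈ Finset.univ.erase k, Proj n φ = 1 - Proj k φ := by
        have h := hsum φ
        rw [← Finset.add_sum_erase _ _ (Finset.mem_univ k)] at h
        exact eq_sub_of_add_eq' h
      rw [hse, sub_mul, one_mul, mul_sub, mul_one]
      have h1 := f1 κ k
      calc fderiv ℝ (Proj k) φ (EuclideanSpace.single κ 1)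
            + (fderiv ℝ (Proj k) φ (EuclideanSpace.single κ 1)
              - Proj k φ * fderiv ℝ (Proj k) φ (EuclideanSpace.single κ 1)
            + (fderiv ℝ (Proj k) φ (EuclideanSpace.single κ 1)
              - fderiv ℝ (Proj k) φ (EuclideanSpace.single κ 1) * Proj k φ))
          = fderiv ℝ (Proj k) φ (EuclideanSpace.single κ 1)
            + (fderiv ℝ (Proj k) φ (EuclideanSpace.single κ 1)
              + fderiv ℝ (Proj k) φ (EuclideanSpace.single κ 1))
            - (Proj k φ * fderiv ℝ (Proj k) φ (EuclideanSpace.single κ 1)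
              + fderiv ℝ (Proj k) φ (EuclideanSpace.single κ 1) * Proj k φ) := by abel
        _ = _ := by rw [← h1]; abel
    rw [hA κ φ, smul_mul_assoc, mul_smul_comm, ← smul_sub, Finset.sum_mul, Finset.mul_sum,
      ← Finset.sum_sub_distrib, hGsum, smul_add, ← add_smul,
      show (Complex.I / 2 + Complex.I / 2 : ℂ) = Complex.I by ring]
  -- commutator identity for PiS
  have keyP : ∀ κ : Fin d, Complex.I • fderiv ℝ PiS φ (EuclideanSpace.single κ 1)
      = A κ φ * PiS φ - PiS φ * A κ φ := by
    intro κ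
    rw [hpDsum, ContinuousLinearMap.coe_sum', Finset.sum_apply, Finset.smul_sum,
      hPiS φ, Finset.mul_sum, Finset.sum_mul, ← Finset.sum_sub_distrib]
    exact Finset.sum_congr rfl fun m _ => (comm_k κ m).symm
  -- derivative of AProj
  have hprod : HasFDerivAt (AProj ν)
      ((PiS φ * A ν φ) • (∑ m ∈ S, fderiv ℝ (Proj m) φ)
        + ((PiS φ • fderiv ℝ (A ν) φ
            + (∑ m ∈ S, fderiv ℝ (Proj m) φ).smulRight (A ν φ)).smulRight (PiS φ))) φ := by
    have h := (hPiS_sum.mul' hb).mul' hPiS_sum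
    have heq : AProj ν = fun ψ => PiS ψ * A ν ψ * PiS ψ := funext (hAProj ν)
    rw [heq]
    exact h.congr_fderiv (ContinuousLinearMap.ext fun v => by simp [ContinuousLinearMap.smulRight_apply, op_smul_eq_mul, add_mul])
  have happ : fderiv ℝ (AProj ν) φ (EuclideanSpace.single μ 1)
      = PiS φ * A ν φ * fderiv ℝ PiS φ (EuclideanSpace.single μ 1)
        + (PiS φ * fderiv ℝ (A ν) φ (EuclideanSpace.single μ 1)
          + fderiv ℝ PiS φ (EuclideanSpace.single μ 1) * A ν φ) * PiS φ := by
    rw [hprod.fderiv, hpDsum]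
    simp [ContinuousLinearMap.smulRight_apply, smul_eq_mul, mul_assoc]
  -- final assembly
  have hk := kato_alg (PiS φ) (A μ φ) (A ν φ)
    (fderiv ℝ PiS φ (EuclideanSpace.single μ 1)) (fderiv ℝ PiS φ (EuclideanSpace.single ν 1))
    hp (keyP μ) (keyP ν)
  rw [happ, hF]
  have hl : ∀ x : V →L[ℂ] V, PiS φ * (PiS φ * x) = PiS φ * x :=
    fun x => by rw [← mul_assoc, hp]
  have hexp : PiS φ * (PiS φ * A ν φ * fderiv ℝ PiS φ (EuclideanSpace.single μ 1)
        + (PiS φ * fderiv ℝ (A ν) φ (EuclideanSpace.single μ 1)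
          + fderiv ℝ PiS φ (EuclideanSpace.single μ 1) * A ν φ) * PiS φ) * PiS φ
      = PiS φ * A ν φ * fderiv ℝ PiS φ (EuclideanSpace.single μ 1) * PiS φ
        + PiS φ * fderiv ℝ (A ν) φ (EuclideanSpace.single μ 1) * PiS φ
        + PiS φ * fderiv ℝ PiS φ (EuclideanSpace.single μ 1) * A ν φ * PiS φ := by
    simp only [mul_add, add_mul, mul_assoc, hl, hp]
    abel
  rw [hexp, ← hk]
  abel
end

section
/- Let V be a finite-dimensional complex inner product space, {Π^n(φ)}_{n∈N} a continuously differentiable family of self-adjoint idempotents on V with Π^nΠ^m = 0 for n ≠ m and Σ_n Π^n = 1 at every φ ∈ ℝ^d, and A_μ(φ) = (i/2) Σ_n [∂_μΠ^n(φ), Π^n(φ)] the Kato gauge potential. For a subset S ⊆ N set Π(φ) = Σ_{m∈S} Π^m(φ). Then the non-abelian Berry curvature 𝔉_{μν}^{(Π)}(φ) = i Π(φ)[∂_μΠ(φ), ∂_νΠ(φ)]Π(φ) satisfies 𝔉_{μν}^{(Π)} = i Π A_μ (1 − Π) A_ν Π − i Π A_ν (1 − Π) A_μ Π. -/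
section Aux
variable {R : Type*} [Ring R]

lemma aux_in_left (P Q B : R) (hPQ : P*Q = Q) (hQP : Q*P = Q) (hB : Q*B + B*Q = B) :
    P * (B*Q - Q*B) * (1-P) = -(B*(1-P)) := by
  have hQB : Q*B = B - B*Q := eq_sub_of_add_eq hB
  have s1 : P * (B*Q - Q*B) * (1-P) = P*B*(Q - Q*P) + ((P*Q)*B*P - (P*Q)*B) := by
    noncomm_ring
  rw [s1, hQP, sub_self, mul_zero, zero_add, hPQ, hQB]
  have s2 : (B - B*Q)*P - (B - B*Q) = -(B*(1-P)) + B*(Q - Q*P) := by noncomm_ring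
  rw [s2, hQP, sub_self, mul_zero, add_zero]

lemma aux_out_left (P Q B D : R) (hPQ : P*Q = 0) (hQP : Q*P = 0) (hQQ : Q*Q = Q)
    (hPB : P*B = -(D*Q)) :
    P * (B*Q - Q*B) * (1-P) = -(D*Q) := by
  have s1 : P * (B*Q - Q*B) * (1-P) = (P*B)*(Q - Q*P) - ((P*Q)*B - (P*Q)*(B*P)) := by
    noncomm_ring
  rw [s1, hQP, hPQ, hPB]
  simp only [sub_zero, zero_mul, sub_self, neg_mul, mul_assoc, hQQ]

lemma aux_in_right (P Q B : R) (hPQ : P*Q = Q) (hQP : Q*P = Q) (hB : Q*B + B*Q = B) :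
    (1-P) * (B*Q - Q*B) * P = B - P*B := by
  have hBQ : B*Q = B - Q*B := eq_sub_of_add_eq' hB
  have s1 : (1-P) * (B*Q - Q*B) * P
      = B*(Q*P) - P*(B*(Q*P)) - (Q*(B*P) - (P*Q)*(B*P)) := by noncomm_ring
  rw [s1, hQP, hPQ, sub_self, sub_zero, hBQ]
  have s2 : (B - Q*B) - P*(B - Q*B) = (B - P*B) - ((1-P)*Q)*B := by noncomm_ring
  have h0 : (1-P)*Q = 0 := by rw [sub_mul, one_mul, hPQ, sub_self]
  rw [s2, h0, zero_mul, sub_zero]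

lemma aux_out_right (P Q B D : R) (hPQ : P*Q = 0) (hQP : Q*P = 0) (hQQ : Q*Q = Q)
    (hBP : B*P = -(Q*D)) :
    (1-P) * (B*Q - Q*B) * P = -(B*P) := by
  have s1 : (1-P) * (B*Q - Q*B) * P
      = B*(Q*P) - P*(B*(Q*P)) - (Q*(B*P) - (P*Q)*(B*P)) := by noncomm_ring
  rw [s1, hQP, hPQ, hBP]
  simp only [mul_zero, zero_mul, sub_zero, zero_sub, mul_neg, neg_neg, neg_zero,
    ← mul_assoc, hQQ]

end Aux

/-- With `Π(φ) = Σ_{m∈S} Π^m(φ)` and the Kato gauge potential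
`A_μ`, the non-abelian Berry curvature `𝔉_{μν}^{(Π)} = i Π[∂_μΠ, ∂_νΠ]Π`
satisfies `𝔉_{μν}^{(Π)} = i Π A_μ (1 − Π) A_ν Π − i Π A_ν (1 − Π) A_μ Π`. -/
theorem berry_curvature_in_terms_of_kato_potential
    {V : Type*} [NormedAddCommGroup V] [InnerProductSpace ℂ V] [FiniteDimensional ℂ V]
    {d : ℕ} {N : Type*} [Fintype N]
    (Proj : N → EuclideanSpace ℝ (Fin d) → (V →L[ℂ] V))
    (hC1 : ∀ n, ContDiff ℝ 1 (Proj n))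
    (hsa : ∀ n φ, IsSelfAdjoint (Proj n φ))
    (hidem : ∀ n φ, Proj n φ * Proj n φ = Proj n φ)
    (horth : ∀ n m, n ≠ m → ∀ φ, Proj n φ * Proj m φ = 0)
    (hsum : ∀ φ, ∑ n, Proj n φ = 1)
    (A : Fin d → EuclideanSpace ℝ (Fin d) → (V →L[ℂ] V))
    (hA : ∀ μ φ, A μ φ = (Complex.I / 2) • ∑ n,
      (fderiv ℝ (Proj n) φ (EuclideanSpace.single μ 1) * Proj n φ
        - Proj n φ * fderiv ℝ (Proj n) φ (EuclideanSpace.single μ 1)))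
    (S : Finset N)
    (PiS : EuclideanSpace ℝ (Fin d) → (V →L[ℂ] V))
    (hPiS : ∀ φ, PiS φ = ∑ m ∈ S, Proj m φ)
    (μ ν : Fin d) (φ : EuclideanSpace ℝ (Fin d)) :
    Complex.I • (PiS φ *
      (fderiv ℝ PiS φ (EuclideanSpace.single μ 1) * fderiv ℝ PiS φ (EuclideanSpace.single ν 1)
        - fderiv ℝ PiS φ (EuclideanSpace.single ν 1) * fderiv ℝ PiS φ (EuclideanSpace.single μ 1))
      * PiS φ)
    = Complex.I • (PiS φ * A μ φ * (1 - PiS φ) * A ν φ * PiS φ)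
      - Complex.I • (PiS φ * A ν φ * (1 - PiS φ) * A μ φ * PiS φ) := by
  classical
  -- differentiability
  have hdn : ∀ n, DifferentiableAt ℝ (Proj n) φ :=
    fun n => ((hC1 n).differentiable one_ne_zero).differentiableAt
  have hPiSfun : PiS = fun ψ => ∑ m ∈ S, Proj m ψ := funext hPiS
  have hdP : DifferentiableAt ℝ PiS φ := by
    rw [hPiSfun]; exact DifferentiableAt.fun_sum (fun m _ => hdn m)
  -- product rule (evaluated)
  have hmul : ∀ (f g : EuclideanSpace ℝ (Fin d) → (V →L[ℂ] V)),
      DifferentiableAt ℝ f φ → DifferentiableAt ℝ g φ →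
      ∀ w, fderiv ℝ (fun ψ => f ψ * g ψ) φ w
        = f φ * fderiv ℝ g φ w + fderiv ℝ f φ w * g φ := by
    intro f g hf hg w
    rw [(hf.hasFDerivAt.fun_mul' hg.hasFDerivAt).fderiv]
    simp [smul_eq_mul]
  -- derivative of sum
  have hDsum : ∀ w, fderiv ℝ PiS φ w = ∑ m ∈ S, fderiv ℝ (Proj m) φ w := by
    intro w
    rw [hPiSfun, fderiv_fun_sum (fun m _ => hdn m)]
    simp
  -- algebraic pointwise facts
  have hPQψ : ∀ ψ, ∀ n ∈ S, PiS ψ * Proj n ψ = Proj n ψ := by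
    intro ψ n hn
    rw [hPiS ψ, Finset.sum_mul]
    rw [Finset.sum_eq_single_of_mem n hn (fun m _ hmn => horth m n hmn ψ)]
    exact hidem n ψ
  have hQPψ : ∀ ψ, ∀ n ∈ S, Proj n ψ * PiS ψ = Proj n ψ := by
    intro ψ n hn
    rw [hPiS ψ, Finset.mul_sum]
    rw [Finset.sum_eq_single_of_mem n hn (fun m _ hmn => horth n m (Ne.symm hmn) ψ)]
    exact hidem n ψ
  have hPQ0ψ : ∀ ψ, ∀ n ∉ S, PiS ψ * Proj n ψ = 0 := by
    intro ψ n hn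
    rw [hPiS ψ, Finset.sum_mul]
    exact Finset.sum_eq_zero (fun m hm => horth m n (by rintro rfl; exact hn hm) ψ)
  have hQP0ψ : ∀ ψ, ∀ n ∉ S, Proj n ψ * PiS ψ = 0 := by
    intro ψ n hn
    rw [hPiS ψ, Finset.mul_sum]
    exact Finset.sum_eq_zero (fun m hm => horth n m (by rintro rfl; exact hn hm) ψ)
  have hPPψ : ∀ ψ, PiS ψ * PiS ψ = PiS ψ := by
    intro ψ
    nth_rewrite 2 [hPiS ψ]
    rw [Finset.mul_sum, Finset.sum_congr rfl (fun n hn => hPQψ ψ n hn), ← hPiS ψ]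
  set P : V →L[ℂ] V := PiS φ with hPdef
  -- derivative relations
  have hB : ∀ n w, Proj n φ * fderiv ℝ (Proj n) φ w + fderiv ℝ (Proj n) φ w * Proj n φ
      = fderiv ℝ (Proj n) φ w := by
    intro n w
    have h0 : (fun ψ => Proj n ψ * Proj n ψ) = Proj n := funext (hidem n)
    have h := hmul (Proj n) (Proj n) (hdn n) (hdn n) w
    rw [h0] at h
    exact h.symm
  have hDrel : ∀ w, P * fderiv ℝ PiS φ w + fderiv ℝ PiS φ w * P = fderiv ℝ PiS φ w := by
    intro w
    have h0 : (fun ψ => PiS ψ * PiS ψ) = PiS := funext hPPψ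
    have h := hmul PiS PiS hdP hdP w
    rw [h0] at h
    exact h.symm
  have hPB0 : ∀ n ∉ S, ∀ w, P * fderiv ℝ (Proj n) φ w
      = -(fderiv ℝ PiS φ w * Proj n φ) := by
    intro n hn w
    have h0 : (fun ψ => PiS ψ * Proj n ψ) = fun _ => (0 : V →L[ℂ] V) :=
      funext (fun ψ => hPQ0ψ ψ n hn)
    have h := hmul PiS (Proj n) hdP (hdn n) w
    rw [h0, fderiv_const_apply] at h
    simpa using eq_neg_of_add_eq_zero_left h.symm
  have hBP0 : ∀ n ∉ S, ∀ w, fderiv ℝ (Proj n) φ w * P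
      = -(Proj n φ * fderiv ℝ PiS φ w) := by
    intro n hn w
    have h0 : (fun ψ => Proj n ψ * PiS ψ) = fun _ => (0 : V →L[ℂ] V) :=
      funext (fun ψ => hQP0ψ ψ n hn)
    have h := hmul (Proj n) PiS (hdn n) hdP w
    rw [h0, fderiv_const_apply] at h
    simpa using eq_neg_of_add_eq_zero_right h.symm
  -- complement sums
  have hcompl : ∑ n ∈ Sᶜ, Proj n φ = 1 - P := by
    have h := Finset.sum_add_sum_compl S (fun n => Proj n φ)
    rw [hsum φ, ← hPiS φ] at h
    exact eq_sub_of_add_eq' h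
  have hcomplD : ∀ w, ∑ n ∈ Sᶜ, fderiv ℝ (Proj n) φ w = -(fderiv ℝ PiS φ w) := by
    intro w
    have hall : ∑ n, fderiv ℝ (Proj n) φ w = 0 := by
      have h0 : (fun ψ => ∑ n, Proj n ψ) = fun _ => (1 : V →L[ℂ] V) := funext hsum
      have hder : fderiv ℝ (fun ψ => ∑ n, Proj n ψ) φ = ∑ n, fderiv ℝ (Proj n) φ :=
        fderiv_fun_sum (fun n _ => hdn n)
      rw [h0, fderiv_fun_const] at hder
      have := congrArg (fun (L : EuclideanSpace ℝ (Fin d) →L[ℝ] (V →L[ℂ] V)) => L w) hder.symm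
      simpa using this
    have h := Finset.sum_add_sum_compl S (fun n => fderiv ℝ (Proj n) φ w)
    rw [hall, ← hDsum w] at h
    have := eq_sub_of_add_eq' h
    simpa using this
  -- key sandwich formulas
  have hK1 : ∀ κ : Fin d, P * A κ φ * (1 - P)
      = -(Complex.I • (fderiv ℝ PiS φ (EuclideanSpace.single κ 1) * (1 - P))) := by
    intro κ
    rw [hA κ φ, mul_smul_comm, smul_mul_assoc, Finset.mul_sum, Finset.sum_mul]
    rw [← Finset.sum_add_sum_compl S]
    have hS : ∑ n ∈ S, P * (fderiv ℝ (Proj n) φ (EuclideanSpace.single κ 1) * Proj n φ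
          - Proj n φ * fderiv ℝ (Proj n) φ (EuclideanSpace.single κ 1)) * (1 - P)
        = -(fderiv ℝ PiS φ (EuclideanSpace.single κ 1) * (1 - P)) := by
      rw [Finset.sum_congr rfl (fun n hn => aux_in_left P (Proj n φ) _
        (hPQψ φ n hn) (hQPψ φ n hn) (hB n _))]
      rw [Finset.sum_neg_distrib, ← Finset.sum_mul, ← hDsum]
    have hSc : ∑ n ∈ Sᶜ, P * (fderiv ℝ (Proj n) φ (EuclideanSpace.single κ 1) * Proj n φ
          - Proj n φ * fderiv ℝ (Proj n) φ (EuclideanSpace.single κ 1)) * (1 - P)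
        = -(fderiv ℝ PiS φ (EuclideanSpace.single κ 1) * (1 - P)) := by
      have step : ∀ n ∈ Sᶜ, P * (fderiv ℝ (Proj n) φ (EuclideanSpace.single κ 1) * Proj n φ
          - Proj n φ * fderiv ℝ (Proj n) φ (EuclideanSpace.single κ 1)) * (1 - P)
          = -(fderiv ℝ PiS φ (EuclideanSpace.single κ 1) * Proj n φ) := by
        intro n hn
        rw [Finset.mem_compl] at hn
        exact aux_out_left P (Proj n φ) _ _ (hPQ0ψ φ n hn) (hQP0ψ φ n hn)
          (hidem n φ) (hPB0 n hn _)
      rw [Finset.sum_congr rfl step, Finset.sum_neg_distrib, ← Finset.mul_sum, hcompl]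
    rw [hS, hSc]
    rw [← two_smul ℂ, smul_smul, smul_neg]
    norm_num
  have hK2 : ∀ κ : Fin d, (1 - P) * A κ φ * P
      = Complex.I • (fderiv ℝ PiS φ (EuclideanSpace.single κ 1) * P) := by
    intro κ
    have hDP : fderiv ℝ PiS φ (EuclideanSpace.single κ 1) * P
        = fderiv ℝ PiS φ (EuclideanSpace.single κ 1)
          - P * fderiv ℝ PiS φ (EuclideanSpace.single κ 1) :=
      eq_sub_of_add_eq' (hDrel _)
    rw [hA κ φ, mul_smul_comm, smul_mul_assoc, Finset.mul_sum, Finset.sum_mul]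
    rw [← Finset.sum_add_sum_compl S]
    have hS : ∑ n ∈ S, (1 - P) * (fderiv ℝ (Proj n) φ (EuclideanSpace.single κ 1) * Proj n φ
          - Proj n φ * fderiv ℝ (Proj n) φ (EuclideanSpace.single κ 1)) * P
        = fderiv ℝ PiS φ (EuclideanSpace.single κ 1) * P := by
      rw [Finset.sum_congr rfl (fun n hn => aux_in_right P (Proj n φ) _
        (hPQψ φ n hn) (hQPψ φ n hn) (hB n _))]
      rw [Finset.sum_sub_distrib, ← Finset.mul_sum, ← hDsum]
      exact hDP.symm
    have hSc : ∑ n ∈ Sᶜ, (1 - P) * (fderiv ℝ (Proj n) φ (EuclideanSpace.single κ 1) * Proj n φ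
          - Proj n φ * fderiv ℝ (Proj n) φ (EuclideanSpace.single κ 1)) * P
        = fderiv ℝ PiS φ (EuclideanSpace.single κ 1) * P := by
      have step : ∀ n ∈ Sᶜ, (1 - P) * (fderiv ℝ (Proj n) φ (EuclideanSpace.single κ 1) * Proj n φ
          - Proj n φ * fderiv ℝ (Proj n) φ (EuclideanSpace.single κ 1)) * P
          = -(fderiv ℝ (Proj n) φ (EuclideanSpace.single κ 1) * P) := by
        intro n hn
        rw [Finset.mem_compl] at hn
        exact aux_out_right P (Proj n φ) _ _ (hPQ0ψ φ n hn) (hQP0ψ φ n hn)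
          (hidem n φ) (hBP0 n hn _)
      rw [Finset.sum_congr rfl step, Finset.sum_neg_distrib, ← Finset.sum_mul, hcomplD,
        neg_mul, neg_neg]
    rw [hS, hSc]
    rw [← two_smul ℂ, smul_smul]
    norm_num
  -- combine
  have hPP : P * P = P := hPPψ φ
  have h1P : (1 - P) * (1 - P) = 1 - P := by noncomm_ring [hPP]
  have hPD : ∀ w, fderiv ℝ PiS φ w * (1 - P) = P * fderiv ℝ PiS φ w := by
    intro w
    have h := eq_sub_of_add_eq (hDrel w)
    rw [mul_sub, mul_one, ← h]
  have hterm : ∀ κ l : Fin d, P * A κ φ * (1 - P) * A l φ * P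
      = P * (fderiv ℝ PiS φ (EuclideanSpace.single κ 1)
          * fderiv ℝ PiS φ (EuclideanSpace.single l 1)) * P := by
    intro κ l
    have h12 : P * A κ φ * (1 - P) * A l φ * P
        = (P * A κ φ * (1 - P)) * ((1 - P) * A l φ * P) := by
      have h : (P * A κ φ * (1 - P)) * ((1 - P) * A l φ * P)
          = (P * A κ φ) * ((1 - P) * (1 - P)) * (A l φ * P) := by noncomm_ring
      rw [h, h1P]
      noncomm_ring
    rw [h12, hK1 κ, hK2 l, neg_mul, smul_mul_smul_comm, Complex.I_mul_I, neg_one_smul, neg_neg]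
    rw [hPD]
    noncomm_ring
  rw [hterm μ ν, hterm ν μ, ← smul_sub]
  congr 1
  noncomm_ring
end

section
/- Let V be a finite-dimensional complex inner product space, Π : ℝ^d → End(V) a twice continuously differentiable family of self-adjoint idempotents, and A_ν : ℝ^d → End(V) a continuously differentiable family of operators such that ∂_μΠ(φ) = −i[A_μ(φ), Π(φ)] and Π(φ) A_ν(φ) Π(φ) = 0 for all φ and all directions μ, ν. Then Π(φ) (∂_μ A_ν(φ)) Π(φ) = −𝔉_{μν}^{(Π)}(φ), where 𝔉_{μν}^{(Π)}(φ) = i Π(φ)[∂_μΠ(φ), ∂_νΠ(φ)]Π(φ). -/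
/-- If `Π` is a twice continuously differentiable family of
self-adjoint idempotents and `A_ν` a continuously differentiable family of
operators with `∂_μΠ = −i[A_μ, Π]` and `Π A_ν Π = 0` for all directions, then
the projected derivative of the counterdiabatic term equals minus the
projected Berry curvature: `Π (∂_μ A_ν) Π = −𝔉_{μν}^{(Π)}`, where
`𝔉_{μν}^{(Π)} = i Π[∂_μΠ, ∂_νΠ]Π`. -/
theorem projected_derivative_of_counterdiabatic_eq_neg_curvature
    {V : Type*} [NormedAddCommGroup V] [InnerProductSpace ℂ V] [FiniteDimensional ℂ V]
    {d : ℕ}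
    (Pr : EuclideanSpace ℝ (Fin d) → (V →L[ℂ] V))
    (hC2 : ContDiff ℝ 2 Pr)
    (hsa : ∀ φ, IsSelfAdjoint (Pr φ))
    (hidem : ∀ φ, Pr φ * Pr φ = Pr φ)
    (A : Fin d → EuclideanSpace ℝ (Fin d) → (V →L[ℂ] V))
    (hAC1 : ∀ ν, ContDiff ℝ 1 (A ν))
    (hder : ∀ μ φ, fderiv ℝ Pr φ (EuclideanSpace.single μ 1)
      = (-Complex.I) • (A μ φ * Pr φ - Pr φ * A μ φ))
    (hoff : ∀ ν φ, Pr φ * A ν φ * Pr φ = 0)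
    (μ ν : Fin d) (φ : EuclideanSpace ℝ (Fin d)) :
    Pr φ * fderiv ℝ (A ν) φ (EuclideanSpace.single μ 1) * Pr φ
      = -(Complex.I • (Pr φ *
          (fderiv ℝ Pr φ (EuclideanSpace.single μ 1) * fderiv ℝ Pr φ (EuclideanSpace.single ν 1)
            - fderiv ℝ Pr φ (EuclideanSpace.single ν 1) * fderiv ℝ Pr φ (EuclideanSpace.single μ 1))
          * Pr φ)) := by
  have hPd : HasFDerivAt Pr (fderiv ℝ Pr φ) φ :=
    (hC2.differentiable two_ne_zero φ).hasFDerivAt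
  have hAd : HasFDerivAt (A ν) (fderiv ℝ (A ν) φ) φ :=
    ((hAC1 ν).differentiable one_ne_zero φ).hasFDerivAt
  have hmul := (hPd.mul' hAd).mul' hPd
  have hfun : (fun x => Pr x * A ν x * Pr x) = (fun _ => (0 : V →L[ℂ] V)) :=
    funext fun x => hoff ν x
  rw [show Pr * A ν * Pr = fun _ => (0 : V →L[ℂ] V) from hfun] at hmul
  have hD0 := hmul.unique (hasFDerivAt_const 0 φ)
  have hsum := congrArg (fun (L : EuclideanSpace ℝ (Fin d) →L[ℝ] (V →L[ℂ] V)) =>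
      L (EuclideanSpace.single μ 1)) hD0
  simp only [ContinuousLinearMap.add_apply, ContinuousLinearMap.smul_apply,
    ContinuousLinearMap.smulRight_apply, ContinuousLinearMap.zero_apply,
    smul_eq_mul, Pi.mul_apply, MulOpposite.smul_eq_mul_unop, MulOpposite.unop_op] at hsum
  set P := Pr φ with hPdef
  set Am := A μ φ
  set An := A ν φ
  set Dμ := fderiv ℝ Pr φ (EuclideanSpace.single μ 1) with hDμdef
  set Dν := fderiv ℝ Pr φ (EuclideanSpace.single ν 1) with hDνdef
  set DA := fderiv ℝ (A ν) φ (EuclideanSpace.single μ 1)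
  have hP : P * P = P := hidem φ
  have hm : P * Am * P = 0 := hoff μ φ
  have hn : P * An * P = 0 := hoff ν φ
  have hDμ : Dμ = (-Complex.I) • (Am * P - P * Am) := hder μ φ
  have hDν : Dν = (-Complex.I) • (An * P - P * An) := hder ν φ
  -- sandwiching facts
  have hPDμ : P * Dμ = Complex.I • (P * Am) := by
    rw [hDμ, mul_smul_comm, mul_sub, ← mul_assoc, hm, ← mul_assoc, hP]
    simp [smul_smul]
  have hPDν : P * Dν = Complex.I • (P * An) := by
    rw [hDν, mul_smul_comm, mul_sub, ← mul_assoc, hn, ← mul_assoc, hP]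
    simp [smul_smul]
  have hDμP : Dμ * P = (-Complex.I) • (Am * P) := by
    rw [hDμ, smul_mul_assoc, sub_mul, hm, sub_zero, mul_assoc, hP]
  have hDνP : Dν * P = (-Complex.I) • (An * P) := by
    rw [hDν, smul_mul_assoc, sub_mul, hn, sub_zero, mul_assoc, hP]
  have hPDμX : ∀ X : V →L[ℂ] V, P * (Dμ * X) = Complex.I • (P * (Am * X)) := fun X => by
    rw [← mul_assoc, hPDμ, smul_mul_assoc, mul_assoc]
  have hPX : ∀ X : V →L[ℂ] V, P * (P * X) = P * X := fun X => by
    rw [← mul_assoc, hP]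
  -- sandwich hsum with P on both sides
  have key : P * ((P * An * Dμ + (P * DA + Dμ * An) * P) * P) = 0 := by
    rw [hsum, zero_mul, mul_zero]
  simp only [add_mul, mul_add, mul_assoc, hP] at key
  rw [hDμP] at key
  simp only [mul_smul_comm, hPX, hPDμX] at key
  -- key : (-I)•(P*(An*(Am*P))) + (P*(DA*P) + I•(P*(Am*(An*P)))) = 0
  have h1 : P * (DA * P) + Complex.I • (P * (Am * (An * P)))
      = -((-Complex.I) • (P * (An * (Am * P)))) := eq_neg_of_add_eq_zero_right key
  rw [neg_smul, neg_neg] at h1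
  have final : P * (DA * P)
      = Complex.I • (P * (An * (Am * P))) - Complex.I • (P * (Am * (An * P))) :=
    eq_sub_of_add_eq h1
  -- curvature terms
  have rμν : P * (Dμ * Dν) * P = P * (Am * (An * P)) := by
    rw [mul_assoc, mul_assoc, hDνP, mul_smul_comm, mul_smul_comm, hPDμX, smul_smul]
    simp
  have rνμ : P * (Dν * Dμ) * P = P * (An * (Am * P)) := by
    rw [mul_assoc, mul_assoc, hDμP, mul_smul_comm, mul_smul_comm, ← mul_assoc P Dν,
      hPDν, smul_mul_assoc, smul_smul, mul_assoc]
    simp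
  have hcomm : P * (Dμ * Dν - Dν * Dμ) * P
      = P * (Am * (An * P)) - P * (An * (Am * P)) := by
    rw [mul_sub, sub_mul, rμν, rνμ]
  rw [mul_assoc P DA P, final, hcomm, smul_sub, neg_sub]
end

section
/- Let V be a finite-dimensional complex inner product space and let {v_β(φ)}_{β∈B} (B a finite index type) be a continuously twice differentiable family of vectors in V that is orthonormal at every φ ∈ ℝ^d, and set Π(φ) = Σ_β |v_β(φ)⟩⟨v_β(φ)|. Define the matrices F_{μν}(φ) with entries F_{μν}^{αβ}(φ) = ⟨v_α(φ), i[∂_μΠ(φ), ∂_νΠ(φ)] v_β(φ)⟩ and the Wilczek–Zee connection matrices A_μ(φ) with entries A_μ^{αβ}(φ) = i⟨v_α(φ), ∂_μ v_β(φ)⟩. Then F_{μν} = ∂_μ A_ν − ∂_ν A_μ − i [A_μ, A_ν] as matrix-valued functions of φ. -/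
section Aux

variable {V : Type*} [NormedAddCommGroup V] [InnerProductSpace ℂ V]

lemma isBoundedBilinearMap_rankOne :
    IsBoundedBilinearMap ℝ (fun p : V × V => (innerSL ℂ p.1).smulRight p.2) := by
  constructor
  · intro x₁ x₂ y; ext z
    simp only [ContinuousLinearMap.smulRight_apply, innerSL_apply_apply,
      ContinuousLinearMap.add_apply, inner_add_left, add_smul]
  · intro c x y; ext z
    simp only [ContinuousLinearMap.smulRight_apply, innerSL_apply_apply,
      ContinuousLinearMap.coe_smul', Pi.smul_apply]
    rw [RCLike.real_smul_eq_coe_smul (K := ℂ), inner_smul_real_left]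
    exact smul_assoc c _ y
  · intro x y₁ y₂; ext z
    simp only [ContinuousLinearMap.smulRight_apply, innerSL_apply_apply,
      ContinuousLinearMap.add_apply, smul_add]
  · intro c x y; ext z
    simp only [ContinuousLinearMap.smulRight_apply, innerSL_apply_apply,
      ContinuousLinearMap.coe_smul', Pi.smul_apply]
    exact smul_comm _ _ _
  · refine ⟨1, one_pos, fun x y => ?_⟩
    refine ContinuousLinearMap.opNorm_le_bound _ (by positivity) fun z => ?_
    simp only [ContinuousLinearMap.smulRight_apply, innerSL_apply_apply, norm_smul]
    calc ‖(inner ℂ x z : ℂ)‖ * ‖y‖ ≤ (‖x‖ * ‖z‖) * ‖y‖ := by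
          gcongr; exact norm_inner_le_norm x z
      _ = 1 * ‖x‖ * ‖y‖ * ‖z‖ := by ring

end Aux

/-- Theorem 5 of the supplement. For a twice continuously
differentiable pointwise-orthonormal family of vectors `{v_β(φ)}` with
projector `Π(φ) = Σ_β |v_β⟩⟨v_β|`, the matrix elements
`F_{μν}^{αβ} = ⟨v_α, i[∂_μΠ, ∂_νΠ] v_β⟩` of the non-abelian Berry curvature
are given by the Wilczek–Zee formula
`F_{μν} = ∂_μ A_ν − ∂_ν A_μ − i [A_μ, A_ν]`, with connection
`A_μ^{αβ} = i⟨v_α, ∂_μ v_β⟩`. -/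
theorem berry_curvature_eq_wilczek_zee
    {V : Type*} [NormedAddCommGroup V] [InnerProductSpace ℂ V] [FiniteDimensional ℂ V]
    {d : ℕ} {B : Type*} [Fintype B] [DecidableEq B]
    (v : B → EuclideanSpace ℝ (Fin d) → V)
    (hC2 : ∀ β, ContDiff ℝ 2 (v β))
    (hON : ∀ φ : EuclideanSpace ℝ (Fin d), Orthonormal ℂ fun β => v β φ)
    (Pr : EuclideanSpace ℝ (Fin d) → (V →L[ℂ] V))
    (hPr : ∀ φ, Pr φ = ∑ β, (innerSL ℂ (v β φ)).smulRight (v β φ))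
    (F : Fin d → Fin d → EuclideanSpace ℝ (Fin d) → Matrix B B ℂ)
    (hF : ∀ μ ν φ α β, F μ ν φ α β =
      inner ℂ (v α φ) (Complex.I •
        ((fderiv ℝ Pr φ (EuclideanSpace.single μ 1) * fderiv ℝ Pr φ (EuclideanSpace.single ν 1)
          - fderiv ℝ Pr φ (EuclideanSpace.single ν 1) * fderiv ℝ Pr φ (EuclideanSpace.single μ 1))
          (v β φ))))
    (A : Fin d → EuclideanSpace ℝ (Fin d) → Matrix B B ℂ)
    (hA : ∀ μ φ α β, A μ φ α β =
      Complex.I * inner ℂ (v α φ) (fderiv ℝ (v β) φ (EuclideanSpace.single μ 1)))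
    (μ ν : Fin d) (φ : EuclideanSpace ℝ (Fin d)) (α β : B) :
    F μ ν φ α β
      = fderiv ℝ (fun φ' => A ν φ' α β) φ (EuclideanSpace.single μ 1)
        - fderiv ℝ (fun φ' => A μ φ' α β) φ (EuclideanSpace.single ν 1)
        - Complex.I * ((A μ φ * A ν φ) α β - (A ν φ * A μ φ) α β) := by
  have hd1 : ∀ γ, Differentiable ℝ (v γ) := fun γ => (hC2 γ).differentiable two_ne_zero
  have hdf : ∀ γ (φ' : EuclideanSpace ℝ (Fin d)),
      HasFDerivAt (v γ) (fderiv ℝ (v γ) φ') φ' := fun γ φ' => (hd1 γ φ').hasFDerivAt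
  -- shorthand for the first derivatives at φ
  let w : Fin d → B → V := fun μ' γ => fderiv ℝ (v γ) φ (EuclideanSpace.single μ' 1)
  have hw : ∀ μ' γ, w μ' γ = fderiv ℝ (v γ) φ (EuclideanSpace.single μ' 1) := fun _ _ => rfl
  -- orthonormality as ite
  have hvv : ∀ γ δ : B, (inner ℂ (v γ φ) (v δ φ) : ℂ) = if γ = δ then 1 else 0 := by
    intro γ δ; exact orthonormal_iff_ite.mp (hON φ) γ δ
  -- derivative of orthonormality
  have hwv : ∀ (μ' : Fin d) (γ δ : B),
      (inner ℂ (v γ φ) (w μ' δ) : ℂ) + (inner ℂ (w μ' γ) (v δ φ) : ℂ) = 0 := by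
    intro μ' γ δ
    have h1 : HasFDerivAt (fun φ' : EuclideanSpace ℝ (Fin d) => (inner ℂ (v γ φ') (v δ φ') : ℂ))
        ((fderivInnerCLM ℂ (v γ φ, v δ φ)).comp
          ((fderiv ℝ (v γ) φ).prod (fderiv ℝ (v δ) φ))) φ :=
      (hdf γ φ).inner ℂ (hdf δ φ)
    have h3 : HasFDerivAt (fun φ' : EuclideanSpace ℝ (Fin d) => (inner ℂ (v γ φ') (v δ φ') : ℂ))
        (0 : EuclideanSpace ℝ (Fin d) →L[ℝ] ℂ) φ := by
      have heq : (fun φ' : EuclideanSpace ℝ (Fin d) => (inner ℂ (v γ φ') (v δ φ') : ℂ))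
          = fun _ : EuclideanSpace ℝ (Fin d) => (if γ = δ then (1:ℂ) else 0) := by
        funext φ'; exact orthonormal_iff_ite.mp (hON φ') γ δ
      rw [heq]; exact hasFDerivAt_const _ _
    have h4 := h1.unique h3
    have h5 := congrArg (fun L => L (EuclideanSpace.single μ' 1)) h4
    simp only [ContinuousLinearMap.coe_comp', Function.comp_apply,
      ContinuousLinearMap.prod_apply, fderivInnerCLM_apply, ContinuousLinearMap.zero_apply] at h5
    rw [hw, hw]
    exact h5
  have hwv' : ∀ (μ' : Fin d) (γ δ : B),
      (inner ℂ (w μ' γ) (v δ φ) : ℂ) = - (inner ℂ (v γ φ) (w μ' δ) : ℂ) := by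
    intro μ' γ δ
    have := hwv μ' γ δ; linear_combination this
  -- derivative of the projector
  have hPrD : HasFDerivAt Pr
      (∑ γ, ((isBoundedBilinearMap_rankOne (V := V)).deriv (v γ φ, v γ φ)).comp
        ((fderiv ℝ (v γ) φ).prod (fderiv ℝ (v γ) φ))) φ := by
    have hsum : HasFDerivAt
        (fun φ' : EuclideanSpace ℝ (Fin d) => ∑ γ, (innerSL ℂ (v γ φ')).smulRight (v γ φ'))
        (∑ γ, ((isBoundedBilinearMap_rankOne (V := V)).deriv (v γ φ, v γ φ)).comp
          ((fderiv ℝ (v γ) φ).prod (fderiv ℝ (v γ) φ))) φ := by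
      refine HasFDerivAt.fun_sum fun γ _ => ?_
      exact ((isBoundedBilinearMap_rankOne (V := V)).hasFDerivAt (v γ φ, v γ φ)).comp φ
        ((hdf γ φ).prodMk (hdf γ φ))
    exact hsum.congr_of_eventuallyEq (Filter.Eventually.of_forall fun y => hPr y)
  have hPapp : ∀ (μ' : Fin d) (z : V), fderiv ℝ Pr φ (EuclideanSpace.single μ' 1) z
      = ∑ γ, ((inner ℂ (w μ' γ) z : ℂ) • v γ φ + (inner ℂ (v γ φ) z : ℂ) • w μ' γ) := by
    intro μ' z
    rw [hPrD.fderiv]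
    simp only [ContinuousLinearMap.coe_sum', Finset.sum_apply, ContinuousLinearMap.coe_comp',
      Function.comp_apply, ContinuousLinearMap.prod_apply,
      IsBoundedBilinearMap.deriv_apply, ContinuousLinearMap.add_apply,
      ContinuousLinearMap.smulRight_apply, innerSL_apply_apply]
    refine Finset.sum_congr rfl fun γ _ => ?_
    rw [hw, add_comm]
  -- the projector derivative applied to a frame vector
  have hPv : ∀ ν' : Fin d, fderiv ℝ Pr φ (EuclideanSpace.single ν' 1) (v β φ)
      = w ν' β + ∑ γ, (inner ℂ (w ν' γ) (v β φ) : ℂ) • v γ φ := by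
    intro ν'
    rw [hPapp, Finset.sum_add_distrib, add_comm]
    congr 1
    rw [Finset.sum_congr rfl fun γ _ => by rw [hvv γ β]]
    simp [ite_smul]
  have hinPz : ∀ (μ' : Fin d) (z : V),
      (inner ℂ (v α φ) (fderiv ℝ Pr φ (EuclideanSpace.single μ' 1) z) : ℂ)
      = (inner ℂ (w μ' α) z : ℂ) + ∑ γ, (inner ℂ (v γ φ) z : ℂ) * (inner ℂ (v α φ) (w μ' γ) : ℂ) := by
    intro μ' z
    rw [hPapp, inner_sum]
    simp only [inner_add_right, inner_smul_right, hvv, mul_ite, mul_one, mul_zero]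
    rw [Finset.sum_add_distrib]
    simp [Finset.sum_ite_eq]
  have hvPz : ∀ (ν' : Fin d) (γ : B),
      (inner ℂ (v γ φ) (fderiv ℝ Pr φ (EuclideanSpace.single ν' 1) (v β φ)) : ℂ) = 0 := by
    intro ν' γ
    rw [hPv, inner_add_right, inner_sum]
    simp only [inner_smul_right, hvv, mul_ite, mul_one, mul_zero, Finset.sum_ite_eq,
      Finset.mem_univ, if_true]
    linear_combination hwv ν' γ β
  have hT : ∀ μ' ν' : Fin d,
      (inner ℂ (v α φ) (fderiv ℝ Pr φ (EuclideanSpace.single μ' 1)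
          (fderiv ℝ Pr φ (EuclideanSpace.single ν' 1) (v β φ))) : ℂ)
      = (inner ℂ (w μ' α) (w ν' β) : ℂ)
        + ∑ γ, (inner ℂ (v γ φ) (w ν' β) : ℂ) * (inner ℂ (v α φ) (w μ' γ) : ℂ) := by
    intro μ' ν'
    rw [hinPz]
    simp only [hvPz, zero_mul, Finset.sum_const_zero, add_zero]
    rw [hPv, inner_add_right, inner_sum]
    congr 1
    refine Finset.sum_congr rfl fun γ _ => ?_
    rw [inner_smul_right, hwv' ν' γ β, hwv' μ' α γ]
    ring
  -- second derivatives
  have hS : ∀ γ, HasFDerivAt (fderiv ℝ (v γ)) (fderiv ℝ (fderiv ℝ (v γ)) φ) φ := by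
    intro γ
    have h1 : ContDiff ℝ 1 (fderiv ℝ (v γ)) := (hC2 γ).fderiv_right (by norm_num)
    exact (h1.differentiable one_ne_zero φ).hasFDerivAt
  have hsymm : fderiv ℝ (fderiv ℝ (v β)) φ (EuclideanSpace.single μ 1) (EuclideanSpace.single ν 1)
      = fderiv ℝ (fderiv ℝ (v β)) φ (EuclideanSpace.single ν 1) (EuclideanSpace.single μ 1) :=
    second_derivative_symmetric (fun y => (hd1 β y).hasFDerivAt) (hS β) _ _
  -- derivative of the connection
  have hderivA : ∀ μ' ν' : Fin d, fderiv ℝ (fun φ' => A ν' φ' α β) φ (EuclideanSpace.single μ' 1)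
      = Complex.I * ((inner ℂ (v α φ) (fderiv ℝ (fderiv ℝ (v β)) φ (EuclideanSpace.single μ' 1)
            (EuclideanSpace.single ν' 1)) : ℂ)
          + (inner ℂ (w μ' α) (w ν' β) : ℂ)) := by
    intro μ' ν'
    have hg : HasFDerivAt (fun φ' : EuclideanSpace ℝ (Fin d) =>
          fderiv ℝ (v β) φ' (EuclideanSpace.single ν' 1))
        ((ContinuousLinearMap.apply ℝ V (EuclideanSpace.single ν' 1)).comp
          (fderiv ℝ (fderiv ℝ (v β)) φ)) φ := by
      exact (ContinuousLinearMap.apply ℝ V (EuclideanSpace.single ν' 1)).hasFDerivAt.comp φ (hS β)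
    have hinner : HasFDerivAt
        (fun φ' : EuclideanSpace ℝ (Fin d) =>
          (inner ℂ (v α φ') (fderiv ℝ (v β) φ' (EuclideanSpace.single ν' 1)) : ℂ))
        ((fderivInnerCLM ℂ (v α φ, fderiv ℝ (v β) φ (EuclideanSpace.single ν' 1))).comp
          ((fderiv ℝ (v α) φ).prod
            ((ContinuousLinearMap.apply ℝ V (EuclideanSpace.single ν' 1)).comp
              (fderiv ℝ (fderiv ℝ (v β)) φ)))) φ :=
      (hdf α φ).inner ℂ hg
    have hA' : HasFDerivAt (fun φ' : EuclideanSpace ℝ (Fin d) => A ν' φ' α β)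
        (Complex.I •
          ((fderivInnerCLM ℂ (v α φ, fderiv ℝ (v β) φ (EuclideanSpace.single ν' 1))).comp
          ((fderiv ℝ (v α) φ).prod
            ((ContinuousLinearMap.apply ℝ V (EuclideanSpace.single ν' 1)).comp
              (fderiv ℝ (fderiv ℝ (v β)) φ))))) φ := by
      have heq : (fun φ' : EuclideanSpace ℝ (Fin d) => A ν' φ' α β)
          = fun φ' : EuclideanSpace ℝ (Fin d) =>
              Complex.I • (inner ℂ (v α φ') (fderiv ℝ (v β) φ' (EuclideanSpace.single ν' 1)) : ℂ) := by
        funext φ'; rw [hA, smul_eq_mul]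
      rw [heq]
      exact hinner.const_smul Complex.I
    rw [hA'.fderiv]
    simp only [ContinuousLinearMap.coe_smul', Pi.smul_apply, ContinuousLinearMap.coe_comp',
      Function.comp_apply, ContinuousLinearMap.prod_apply, fderivInnerCLM_apply,
      ContinuousLinearMap.apply_apply, smul_eq_mul, hw]
  -- the commutator term
  have hcomm : ∀ μ' ν' : Fin d, (A μ' φ * A ν' φ) α β
      = - ∑ γ, (inner ℂ (v α φ) (w μ' γ) : ℂ) * (inner ℂ (v γ φ) (w ν' β) : ℂ) := by
    intro μ' ν'
    rw [Matrix.mul_apply, ← Finset.sum_neg_distrib]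
    refine Finset.sum_congr rfl fun γ _ => ?_
    rw [hA, hA, hw, hw]
    have hI : Complex.I * Complex.I = -1 := Complex.I_mul_I
    linear_combination (inner ℂ (v α φ) (fderiv ℝ (v γ) φ (EuclideanSpace.single μ' 1)) : ℂ)
      * (inner ℂ (v γ φ) (fderiv ℝ (v β) φ (EuclideanSpace.single ν' 1)) : ℂ) * hI
  -- put everything together
  rw [hF]
  simp only [ContinuousLinearMap.sub_apply, ContinuousLinearMap.mul_apply, inner_smul_right,
    inner_sub_right]
  rw [hT μ ν, hT ν μ, hderivA μ ν, hderivA ν μ, hsymm, hcomm μ ν, hcomm ν μ]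
  have h1 : ∑ γ, (inner ℂ (v γ φ) (w ν β) : ℂ) * (inner ℂ (v α φ) (w μ γ) : ℂ)
      = ∑ γ, (inner ℂ (v α φ) (w μ γ) : ℂ) * (inner ℂ (v γ φ) (w ν β) : ℂ) :=
    Finset.sum_congr rfl fun γ _ => mul_comm _ _
  have h2 : ∑ γ, (inner ℂ (v γ φ) (w μ β) : ℂ) * (inner ℂ (v α φ) (w ν γ) : ℂ)
      = ∑ γ, (inner ℂ (v α φ) (w ν γ) : ℂ) * (inner ℂ (v γ φ) (w μ β) : ℂ) :=
    Finset.sum_congr rfl fun γ _ => mul_comm _ _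
  rw [h1, h2]
  ring
end

section
/- Let V be a finite-dimensional complex inner product space, H₀ : ℝ^d → End(V) a continuously differentiable family of self-adjoint operators, Π : ℝ^d → End(V) a continuously differentiable family of self-adjoint idempotents, and ε : ℝ^d → ℝ a continuously differentiable function such that H₀(φ) Π(φ) = ε(φ) Π(φ) for all φ. Then for any φ₀ ∈ ℝ^d, any direction μ, and any unit vector ψ ∈ V with Π(φ₀)ψ = ψ, one has ⟨ψ, (∂_μ H₀(φ₀)) ψ⟩ = ∂_μ ε(φ₀). -/
/-- Hellmann–Feynman theorem for a possibly degenerate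
eigenspace. If `H₀(φ) Π(φ) = ε(φ) Π(φ)` with `H₀` self-adjoint, `Π`
self-adjoint idempotent, all continuously differentiable, then for any unit
vector `ψ` with `Π(φ₀)ψ = ψ`, `⟨ψ, (∂_μ H₀(φ₀)) ψ⟩ = ∂_μ ε(φ₀)`. -/
theorem hellmann_feynman_degenerate
    {V : Type*} [NormedAddCommGroup V] [InnerProductSpace ℂ V] [FiniteDimensional ℂ V]
    {d : ℕ}
    (H₀ : EuclideanSpace ℝ (Fin d) → (V →L[ℂ] V))
    (hH₀C1 : ContDiff ℝ 1 H₀)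
    (hH₀sa : ∀ φ, IsSelfAdjoint (H₀ φ))
    (Pr : EuclideanSpace ℝ (Fin d) → (V →L[ℂ] V))
    (hPrC1 : ContDiff ℝ 1 Pr)
    (hPrsa : ∀ φ, IsSelfAdjoint (Pr φ))
    (hidem : ∀ φ, Pr φ * Pr φ = Pr φ)
    (ε : EuclideanSpace ℝ (Fin d) → ℝ)
    (hεC1 : ContDiff ℝ 1 ε)
    (heig : ∀ φ, H₀ φ * Pr φ = (ε φ : ℂ) • Pr φ)
    (φ₀ : EuclideanSpace ℝ (Fin d)) (μ : Fin d)
    (ψ : V) (hψunit : ‖ψ‖ = 1) (hψ : Pr φ₀ ψ = ψ) :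
    (inner ℂ ψ (fderiv ℝ H₀ φ₀ (EuclideanSpace.single μ 1) ψ) : ℂ)
      = ((fderiv ℝ ε φ₀ (EuclideanSpace.single μ 1) : ℝ) : ℂ) := by
  set v := EuclideanSpace.single (𝕜 := ℝ) μ (1 : ℝ) with hv
  -- restriction of scalars as a continuous ℝ-linear map
  set R : (V →L[ℂ] V) →L[ℝ] (V →L[ℝ] V) :=
    ContinuousLinearMap.restrictScalarsL ℂ V V ℝ ℝ with hR
  have hH : HasFDerivAt H₀ (fderiv ℝ H₀ φ₀) φ₀ :=
    ((hH₀C1.differentiable one_ne_zero) φ₀).hasFDerivAt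
  have hP : HasFDerivAt Pr (fderiv ℝ Pr φ₀) φ₀ :=
    ((hPrC1.differentiable one_ne_zero) φ₀).hasFDerivAt
  have hε : HasFDerivAt ε (fderiv ℝ ε φ₀) φ₀ :=
    ((hεC1.differentiable one_ne_zero) φ₀).hasFDerivAt
  have hRH : HasFDerivAt (fun φ => R (H₀ φ)) (R.comp (fderiv ℝ H₀ φ₀)) φ₀ :=
    R.hasFDerivAt.comp φ₀ hH
  have hRP : HasFDerivAt (fun φ => R (Pr φ)) (R.comp (fderiv ℝ Pr φ₀)) φ₀ :=
    R.hasFDerivAt.comp φ₀ hP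
  have hPψ : HasFDerivAt (fun φ => (R (Pr φ)) ψ)
      ((R (Pr φ₀)).comp (0 : EuclideanSpace ℝ (Fin d) →L[ℝ] V)
        + (R.comp (fderiv ℝ Pr φ₀)).flip ψ) φ₀ :=
    hRP.clm_apply (hasFDerivAt_const ψ φ₀)
  have hf : HasFDerivAt (fun φ => (R (H₀ φ)) ((R (Pr φ)) ψ))
      ((R (H₀ φ₀)).comp ((R (Pr φ₀)).comp (0 : EuclideanSpace ℝ (Fin d) →L[ℝ] V)
          + (R.comp (fderiv ℝ Pr φ₀)).flip ψ)
        + (R.comp (fderiv ℝ H₀ φ₀)).flip ((R (Pr φ₀)) ψ)) φ₀ :=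
    hRH.clm_apply hPψ
  have hεc : HasFDerivAt (fun φ => ((ε φ : ℝ) : ℂ))
      (Complex.ofRealCLM.comp (fderiv ℝ ε φ₀)) φ₀ :=
    Complex.ofRealCLM.hasFDerivAt.comp φ₀ hε
  have hg : HasFDerivAt (fun φ => ((ε φ : ℝ) : ℂ) • ((R (Pr φ)) ψ))
      (((ε φ₀ : ℝ) : ℂ) • ((R (Pr φ₀)).comp (0 : EuclideanSpace ℝ (Fin d) →L[ℝ] V)
          + (R.comp (fderiv ℝ Pr φ₀)).flip ψ)
        + (Complex.ofRealCLM.comp (fderiv ℝ ε φ₀)).smulRight ((R (Pr φ₀)) ψ)) φ₀ :=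
    hεc.smul hPψ
  have hfg : (fun φ => (R (H₀ φ)) ((R (Pr φ)) ψ))
      = fun φ => ((ε φ : ℝ) : ℂ) • ((R (Pr φ)) ψ) := by
    funext φ
    have := congrArg (fun (A : V →L[ℂ] V) => A ψ) (heig φ)
    simpa [hR] using this
  have hD := hf.unique (hfg ▸ hg)
  have hDv := congrArg (fun (L : EuclideanSpace ℝ (Fin d) →L[ℝ] V) => L v) hD
  simp only [hR, ContinuousLinearMap.add_apply, ContinuousLinearMap.comp_apply,
    ContinuousLinearMap.flip_apply, ContinuousLinearMap.zero_apply,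
    ContinuousLinearMap.smulRight_apply, ContinuousLinearMap.smul_apply,
    ContinuousLinearMap.coe_restrict_scalarsL', ContinuousLinearMap.coe_restrictScalars',
    ContinuousLinearMap.coe_coe, map_zero, zero_add, Complex.ofRealCLM_apply, hψ] at hDv
  -- hDv : H₀ φ₀ (P' ψ) + (H₀' v) ψ = ε φ₀ • (P' ψ) + ε' v • ψ   (roughly)
  set P' : V := fderiv ℝ Pr φ₀ v ψ with hP'
  set A : V := fderiv ℝ H₀ φ₀ v ψ with hA
  -- eigenvector equation at φ₀
  have heigψ : H₀ φ₀ ψ = ((ε φ₀ : ℝ) : ℂ) • ψ := by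
    have := congrArg (fun (B : V →L[ℂ] V) => B ψ) (heig φ₀)
    simpa [hψ] using this
  -- self-adjointness of H₀ φ₀
  have hsa : ∀ x : V, (inner ℂ ψ (H₀ φ₀ x) : ℂ) = inner ℂ (H₀ φ₀ ψ) x := by
    intro x
    have h := (ContinuousLinearMap.isSelfAdjoint_iff'.mp (hH₀sa φ₀))
    have h2 := ContinuousLinearMap.adjoint_inner_left (H₀ φ₀) x ψ
    rw [h] at h2
    exact h2.symm
  have hinner := congrArg (fun x : V => (inner ℂ ψ x : ℂ)) hDv
  simp only [hR, ContinuousLinearMap.coe_restrict_scalarsL', ContinuousLinearMap.coe_restrictScalars', inner_add_right, inner_smul_right] at hinner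
  have h1 : (inner ℂ ψ (H₀ φ₀ P') : ℂ) = ((ε φ₀ : ℝ) : ℂ) * inner ℂ ψ P' := by
    rw [hsa P', heigψ, inner_smul_left]
    simp [Complex.conj_ofReal]
  have h2 : (inner ℂ ψ ψ : ℂ) = 1 := by
    rw [inner_self_eq_norm_sq_to_K, hψunit]
    norm_num
  rw [h1, h2] at hinner
  -- now cancel
  have := hinner
  ring_nf at this
  linear_combination this
end

section
/- Let u₁, u₂ : ℝ^d → ℝ³ be continuously differentiable maps such that at every φ the vectors u₁(φ), u₂(φ) are orthonormal, and set g(φ) = u₁(φ) × u₂(φ). Then for all directions ν, μ and all φ: g · (∂_ν g × ∂_μ g) = (∂_ν u₁) · (∂_μ u₂) − (∂_ν u₂) · (∂_μ u₁). -/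
open Matrix

private lemma euler_key (a0 a1 a2 b0 b1 b2 A0 A1 A2 B0 B1 B2 C0 C1 C2 D0 D1 D2 : ℝ)
    (h1 : a0*a0 + a1*a1 + a2*a2 = 1) (h2 : b0*b0 + b1*b1 + b2*b2 = 1)
    (h3 : a0*b0 + a1*b1 + a2*b2 = 0)
    (h4 : a0*A0 + a1*A1 + a2*A2 = 0) (h5 : a0*C0 + a1*C1 + a2*C2 = 0)
    (h6 : b0*B0 + b1*B1 + b2*B2 = 0) (h7 : b0*D0 + b1*D1 + b2*D2 = 0) :
    (a1*b2 - a2*b1) * ((A2*b0 - A0*b2 + (a2*B0 - a0*B2)) * (C0*b1 - C1*b0 + (a0*D1 - a1*D0))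
        - (A0*b1 - A1*b0 + (a0*B1 - a1*B0)) * (C2*b0 - C0*b2 + (a2*D0 - a0*D2)))
      + (a2*b0 - a0*b2) * ((A0*b1 - A1*b0 + (a0*B1 - a1*B0)) * (C1*b2 - C2*b1 + (a1*D2 - a2*D1))
        - (A1*b2 - A2*b1 + (a1*B2 - a2*B1)) * (C0*b1 - C1*b0 + (a0*D1 - a1*D0)))
      + (a0*b1 - a1*b0) * ((A1*b2 - A2*b1 + (a1*B2 - a2*B1)) * (C2*b0 - C0*b2 + (a2*D0 - a0*D2))
        - (A2*b0 - A0*b2 + (a2*B0 - a0*B2)) * (C1*b2 - C2*b1 + (a1*D2 - a2*D1)))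
      = (A0*D0 + A1*D1 + A2*D2) - (B0*C0 + B1*C1 + B2*C2) := by
    linear_combination (- B2*C2 - B1*C1 + A2*D2 + A1*D1 + b2*b2*B2*C2 - b2*b2*B0*C0 - b2*b2*A2*D2 + b2*b2*A0*D0 + b1*b2*B2*C1 + b1*b2*B1*C2 - b1*b2*A2*D1 - b1*b2*A1*D2 + b1*b1*B1*C1 - b1*b1*B0*C0 - b1*b1*A1*D1 + b1*b1*A0*D0 + b0*b2*B2*C0 + b0*b2*B0*C2 - b0*b2*A2*D0 - b0*b2*A0*D2 + b0*b1*B1*C0 + b0*b1*B0*C1 - b0*b1*A1*D0 - b0*b1*A0*D1) * h1 + (- B0*C0 + A0*D0 - a2*a2*B1*C1 + a2*a2*A1*D1 + a1*a2*B2*C1 + a1*a2*B1*C2 - a1*a2*A2*D1 - a1*a2*A1*D2 - a1*a1*B2*C2 + a1*a1*A2*D2 + a0*a2*B2*C0 + a0*a2*B0*C2 - a0*a2*A2*D0 - a0*a2*A0*D2 + a0*a1*B1*C0 + a0*a1*B0*C1 - a0*a1*A1*D0 - a0*a1*A0*D1 - a0*a0*B2*C2 - a0*a0*B1*C1 + a0*a0*B0*C0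 + a0*a0*A2*D2 + a0*a0*A1*D1 - a0*a0*A0*D0) * h2 + (- a2*b2*B2*C2 + a2*b2*B1*C1 + a2*b2*B0*C0 + a2*b2*A2*D2 - a2*b2*A1*D1 - a2*b2*A0*D0 - a2*b1*B2*C1 - a2*b1*B1*C2 + a2*b1*A2*D1 + a2*b1*A1*D2 - a2*b0*B2*C0 - a2*b0*B0*C2 + a2*b0*A2*D0 + a2*b0*A0*D2 - a1*b2*B2*C1 - a1*b2*B1*C2 + a1*b2*A2*D1 + a1*b2*A1*D2 + a1*b1*B2*C2 - a1*b1*B1*C1 + a1*b1*B0*C0 - a1*b1*A2*D2 + a1*b1*A1*D1 - a1*b1*A0*D0 - a1*b0*B1*C0 - a1*b0*B0*C1 + a1*b0*A1*D0 + a1*b0*A0*D1 - a0*b2*B2*C0 - a0*b2*B0*C2 + a0*b2*A2*D0 + a0*b2*A0*D2 - a0*b1*B1*C0 - a0*b1*B0*C1 + a0*b1*A1*D0 + a0*b1*A0*D1 + a0*b0*B2*C2 + a0*b0*B1*C1 - a0*b0*B0*C0 - a0*b0*A2*D2 - a0*b0*A1*D1 + a0*b0*A0*D0) * h3 +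
      (- a2*D2 - a1*D1 - a0*D0) * h4 + (a2*B2 + a1*B1 + a0*B0) * h5 + (b2*C2 + b1*C1 + b0*C0) * h6 + (- b2*A2 - b1*A1 - b0*A0) * h7


/-- For pointwise-orthonormal `C¹` vector fields
`u₁, u₂ : ℝ^d → ℝ³` and `g = u₁ × u₂`, the Euler form identity
`g · (∂_ν g × ∂_μ g) = (∂_ν u₁) · (∂_μ u₂) − (∂_ν u₂) · (∂_μ u₁)` holds. -/
theorem euler_form_of_orthonormal_frame
    {d : ℕ}
    (u₁ u₂ : EuclideanSpace ℝ (Fin d) → (Fin 3 → ℝ))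
    (hu₁ : ContDiff ℝ 1 u₁) (hu₂ : ContDiff ℝ 1 u₂)
    (h11 : ∀ φ, dotProduct (u₁ φ) (u₁ φ) = 1)
    (h22 : ∀ φ, dotProduct (u₂ φ) (u₂ φ) = 1)
    (h12 : ∀ φ, dotProduct (u₁ φ) (u₂ φ) = 0)
    (g : EuclideanSpace ℝ (Fin d) → (Fin 3 → ℝ))
    (hg : ∀ φ, g φ = crossProduct (u₁ φ) (u₂ φ))
    (ν μ : Fin d) (φ : EuclideanSpace ℝ (Fin d)) :
    dotProduct (g φ)
        (crossProduct (fderiv ℝ g φ (EuclideanSpace.single ν 1))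
          (fderiv ℝ g φ (EuclideanSpace.single μ 1)))
      = dotProduct (fderiv ℝ u₁ φ (EuclideanSpace.single ν 1))
          (fderiv ℝ u₂ φ (EuclideanSpace.single μ 1))
        - dotProduct (fderiv ℝ u₂ φ (EuclideanSpace.single ν 1))
          (fderiv ℝ u₁ φ (EuclideanSpace.single μ 1)) := by
  have hu₁' : HasFDerivAt u₁ (fderiv ℝ u₁ φ) φ :=
    ((hu₁.differentiable one_ne_zero) φ).hasFDerivAt
  have hu₂' : HasFDerivAt u₂ (fderiv ℝ u₂ φ) φ :=
    ((hu₂.differentiable one_ne_zero) φ).hasFDerivAt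
  have h1i : ∀ i : Fin 3, HasFDerivAt (fun ψ => u₁ ψ i)
      ((ContinuousLinearMap.proj i : (Fin 3 → ℝ) →L[ℝ] ℝ).comp (fderiv ℝ u₁ φ)) φ := by
    intro i
    exact (ContinuousLinearMap.proj i :
      (Fin 3 → ℝ) →L[ℝ] ℝ).hasFDerivAt.comp φ hu₁'
  have h2i : ∀ i : Fin 3, HasFDerivAt (fun ψ => u₂ ψ i)
      ((ContinuousLinearMap.proj i : (Fin 3 → ℝ) →L[ℝ] ℝ).comp (fderiv ℝ u₂ φ)) φ := by
    intro i
    exact (ContinuousLinearMap.proj i :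
      (Fin 3 → ℝ) →L[ℝ] ℝ).hasFDerivAt.comp φ hu₂'
  -- tangency constraints from differentiating ‖u₁‖² = 1 and ‖u₂‖² = 1
  have hcu₁ : ∀ x : EuclideanSpace ℝ (Fin d),
      u₁ φ 0 * fderiv ℝ u₁ φ x 0 + u₁ φ 1 * fderiv ℝ u₁ φ x 1
        + u₁ φ 2 * fderiv ℝ u₁ φ x 2 = 0 := by
    intro x
    have hfun : (fun ψ => u₁ ψ 0 * u₁ ψ 0 + u₁ ψ 1 * u₁ ψ 1 + u₁ ψ 2 * u₁ ψ 2)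
        = fun _ : EuclideanSpace ℝ (Fin d) => (1 : ℝ) := by
      funext ψ
      simpa [dotProduct, Fin.sum_univ_three] using h11 ψ
    have hc : HasFDerivAt
        (fun ψ => u₁ ψ 0 * u₁ ψ 0 + u₁ ψ 1 * u₁ ψ 1 + u₁ ψ 2 * u₁ ψ 2)
        (0 : EuclideanSpace ℝ (Fin d) →L[ℝ] ℝ) φ := by
      rw [hfun]; exact hasFDerivAt_const 1 φ
    have hp := (((h1i 0).mul (h1i 0)).add ((h1i 1).mul (h1i 1))).add
      ((h1i 2).mul (h1i 2))
    have he := hp.unique hc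
    have hx := congrArg (fun L : EuclideanSpace ℝ (Fin d) →L[ℝ] ℝ => L x) he
    simp only [ContinuousLinearMap.add_apply, ContinuousLinearMap.smul_apply,
      ContinuousLinearMap.comp_apply, ContinuousLinearMap.proj_apply,
      smul_eq_mul, ContinuousLinearMap.zero_apply] at hx
    linarith [hx]
  have hcu₂ : ∀ x : EuclideanSpace ℝ (Fin d),
      u₂ φ 0 * fderiv ℝ u₂ φ x 0 + u₂ φ 1 * fderiv ℝ u₂ φ x 1
        + u₂ φ 2 * fderiv ℝ u₂ φ x 2 = 0 := by
    intro x
    have hfun : (fun ψ => u₂ ψ 0 * u₂ ψ 0 + u₂ ψ 1 * u₂ ψ 1 + u₂ ψ 2 * u₂ ψ 2)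
        = fun _ : EuclideanSpace ℝ (Fin d) => (1 : ℝ) := by
      funext ψ
      simpa [dotProduct, Fin.sum_univ_three] using h22 ψ
    have hc : HasFDerivAt
        (fun ψ => u₂ ψ 0 * u₂ ψ 0 + u₂ ψ 1 * u₂ ψ 1 + u₂ ψ 2 * u₂ ψ 2)
        (0 : EuclideanSpace ℝ (Fin d) →L[ℝ] ℝ) φ := by
      rw [hfun]; exact hasFDerivAt_const 1 φ
    have hp := (((h2i 0).mul (h2i 0)).add ((h2i 1).mul (h2i 1))).add
      ((h2i 2).mul (h2i 2))
    have he := hp.unique hc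
    have hx := congrArg (fun L : EuclideanSpace ℝ (Fin d) →L[ℝ] ℝ => L x) he
    simp only [ContinuousLinearMap.add_apply, ContinuousLinearMap.smul_apply,
      ContinuousLinearMap.comp_apply, ContinuousLinearMap.proj_apply,
      smul_eq_mul, ContinuousLinearMap.zero_apply] at hx
    linarith [hx]
  -- componentwise derivatives of g
  have hg0 : HasFDerivAt (fun ψ => g ψ 0)
      (u₁ φ 1 • (ContinuousLinearMap.proj 2 :
          (Fin 3 → ℝ) →L[ℝ] ℝ).comp (fderiv ℝ u₂ φ)
        + u₂ φ 2 • (ContinuousLinearMap.proj 1 :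
          (Fin 3 → ℝ) →L[ℝ] ℝ).comp (fderiv ℝ u₁ φ)
        - (u₁ φ 2 • (ContinuousLinearMap.proj 1 :
          (Fin 3 → ℝ) →L[ℝ] ℝ).comp (fderiv ℝ u₂ φ)
        + u₂ φ 1 • (ContinuousLinearMap.proj 2 :
          (Fin 3 → ℝ) →L[ℝ] ℝ).comp (fderiv ℝ u₁ φ))) φ := by
    have hfun : (fun ψ => g ψ 0) = fun ψ => u₁ ψ 1 * u₂ ψ 2 - u₁ ψ 2 * u₂ ψ 1 := by
      funext ψ; rw [hg ψ, cross_apply]; simp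
    rw [hfun]
    exact ((h1i 1).mul (h2i 2)).sub ((h1i 2).mul (h2i 1))
  have hg1 : HasFDerivAt (fun ψ => g ψ 1)
      (u₁ φ 2 • (ContinuousLinearMap.proj 0 :
          (Fin 3 → ℝ) →L[ℝ] ℝ).comp (fderiv ℝ u₂ φ)
        + u₂ φ 0 • (ContinuousLinearMap.proj 2 :
          (Fin 3 → ℝ) →L[ℝ] ℝ).comp (fderiv ℝ u₁ φ)
        - (u₁ φ 0 • (ContinuousLinearMap.proj 2 :
          (Fin 3 → ℝ) →L[ℝ] ℝ).comp (fderiv ℝ u₂ φ)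
        + u₂ φ 2 • (ContinuousLinearMap.proj 0 :
          (Fin 3 → ℝ) →L[ℝ] ℝ).comp (fderiv ℝ u₁ φ))) φ := by
    have hfun : (fun ψ => g ψ 1) = fun ψ => u₁ ψ 2 * u₂ ψ 0 - u₁ ψ 0 * u₂ ψ 2 := by
      funext ψ; rw [hg ψ, cross_apply]; simp
    rw [hfun]
    exact ((h1i 2).mul (h2i 0)).sub ((h1i 0).mul (h2i 2))
  have hg2 : HasFDerivAt (fun ψ => g ψ 2)
      (u₁ φ 0 • (ContinuousLinearMap.proj 1 :
          (Fin 3 → ℝ) →L[ℝ] ℝ).comp (fderiv ℝ u₂ φ)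
        + u₂ φ 1 • (ContinuousLinearMap.proj 0 :
          (Fin 3 → ℝ) →L[ℝ] ℝ).comp (fderiv ℝ u₁ φ)
        - (u₁ φ 1 • (ContinuousLinearMap.proj 0 :
          (Fin 3 → ℝ) →L[ℝ] ℝ).comp (fderiv ℝ u₂ φ)
        + u₂ φ 0 • (ContinuousLinearMap.proj 1 :
          (Fin 3 → ℝ) →L[ℝ] ℝ).comp (fderiv ℝ u₁ φ))) φ := by
    have hfun : (fun ψ => g ψ 2) = fun ψ => u₁ ψ 0 * u₂ ψ 1 - u₁ ψ 1 * u₂ ψ 0 := by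
      funext ψ; rw [hg ψ, cross_apply]; simp
    rw [hfun]
    exact ((h1i 0).mul (h2i 1)).sub ((h1i 1).mul (h2i 0))
  have hgd : DifferentiableAt ℝ g φ := by
    rw [differentiableAt_pi]
    intro i
    fin_cases i
    exacts [hg0.differentiableAt, hg1.differentiableAt, hg2.differentiableAt]
  have hgic : ∀ i : Fin 3, HasFDerivAt (fun ψ => g ψ i)
      ((ContinuousLinearMap.proj i : (Fin 3 → ℝ) →L[ℝ] ℝ).comp (fderiv ℝ g φ)) φ := by
    intro i
    exact (ContinuousLinearMap.proj i :
      (Fin 3 → ℝ) →L[ℝ] ℝ).hasFDerivAt.comp φ hgd.hasFDerivAt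
  have e0 : ∀ x : EuclideanSpace ℝ (Fin d), fderiv ℝ g φ x 0
      = u₁ φ 1 * fderiv ℝ u₂ φ x 2 + u₂ φ 2 * fderiv ℝ u₁ φ x 1
        - (u₁ φ 2 * fderiv ℝ u₂ φ x 1 + u₂ φ 1 * fderiv ℝ u₁ φ x 2) := by
    intro x
    have he := (hgic 0).unique hg0
    have hx := congrArg (fun L : EuclideanSpace ℝ (Fin d) →L[ℝ] ℝ => L x) he
    simpa only [ContinuousLinearMap.add_apply, ContinuousLinearMap.sub_apply,
      ContinuousLinearMap.smul_apply, ContinuousLinearMap.comp_apply,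
      ContinuousLinearMap.proj_apply, smul_eq_mul] using hx
  have e1 : ∀ x : EuclideanSpace ℝ (Fin d), fderiv ℝ g φ x 1
      = u₁ φ 2 * fderiv ℝ u₂ φ x 0 + u₂ φ 0 * fderiv ℝ u₁ φ x 2
        - (u₁ φ 0 * fderiv ℝ u₂ φ x 2 + u₂ φ 2 * fderiv ℝ u₁ φ x 0) := by
    intro x
    have he := (hgic 1).unique hg1
    have hx := congrArg (fun L : EuclideanSpace ℝ (Fin d) →L[ℝ] ℝ => L x) he
    simpa only [ContinuousLinearMap.add_apply, ContinuousLinearMap.sub_apply,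
      ContinuousLinearMap.smul_apply, ContinuousLinearMap.comp_apply,
      ContinuousLinearMap.proj_apply, smul_eq_mul] using hx
  have e2 : ∀ x : EuclideanSpace ℝ (Fin d), fderiv ℝ g φ x 2
      = u₁ φ 0 * fderiv ℝ u₂ φ x 1 + u₂ φ 1 * fderiv ℝ u₁ φ x 0
        - (u₁ φ 1 * fderiv ℝ u₂ φ x 0 + u₂ φ 0 * fderiv ℝ u₁ φ x 1) := by
    intro x
    have he := (hgic 2).unique hg2
    have hx := congrArg (fun L : EuclideanSpace ℝ (Fin d) →L[ℝ] ℝ => L x) he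
    simpa only [ContinuousLinearMap.add_apply, ContinuousLinearMap.sub_apply,
      ContinuousLinearMap.smul_apply, ContinuousLinearMap.comp_apply,
      ContinuousLinearMap.proj_apply, smul_eq_mul] using hx
  have h1 : u₁ φ 0 * u₁ φ 0 + u₁ φ 1 * u₁ φ 1 + u₁ φ 2 * u₁ φ 2 = 1 := by
    simpa [dotProduct, Fin.sum_univ_three] using h11 φ
  have h2 : u₂ φ 0 * u₂ φ 0 + u₂ φ 1 * u₂ φ 1 + u₂ φ 2 * u₂ φ 2 = 1 := by
    simpa [dotProduct, Fin.sum_univ_three] using h22 φ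
  have h3 : u₁ φ 0 * u₂ φ 0 + u₁ φ 1 * u₂ φ 1 + u₁ φ 2 * u₂ φ 2 = 0 := by
    simpa [dotProduct, Fin.sum_univ_three] using h12 φ
  have key := euler_key (u₁ φ 0) (u₁ φ 1) (u₁ φ 2) (u₂ φ 0) (u₂ φ 1) (u₂ φ 2)
    (fderiv ℝ u₁ φ (EuclideanSpace.single ν 1) 0)
    (fderiv ℝ u₁ φ (EuclideanSpace.single ν 1) 1)
    (fderiv ℝ u₁ φ (EuclideanSpace.single ν 1) 2)
    (fderiv ℝ u₂ φ (EuclideanSpace.single ν 1) 0)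
    (fderiv ℝ u₂ φ (EuclideanSpace.single ν 1) 1)
    (fderiv ℝ u₂ φ (EuclideanSpace.single ν 1) 2)
    (fderiv ℝ u₁ φ (EuclideanSpace.single μ 1) 0)
    (fderiv ℝ u₁ φ (EuclideanSpace.single μ 1) 1)
    (fderiv ℝ u₁ φ (EuclideanSpace.single μ 1) 2)
    (fderiv ℝ u₂ φ (EuclideanSpace.single μ 1) 0)
    (fderiv ℝ u₂ φ (EuclideanSpace.single μ 1) 1)
    (fderiv ℝ u₂ φ (EuclideanSpace.single μ 1) 2)
    h1 h2 h3 (hcu₁ (EuclideanSpace.single ν 1)) (hcu₁ (EuclideanSpace.single μ 1))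
    (hcu₂ (EuclideanSpace.single ν 1)) (hcu₂ (EuclideanSpace.single μ 1))
  rw [hg φ]
  simp only [dotProduct, cross_apply, Fin.sum_univ_three,
    Matrix.cons_val_zero, Matrix.cons_val_one, Matrix.head_cons,
    Matrix.cons_val_two, Matrix.tail_cons,
    e0 (EuclideanSpace.single ν 1), e1 (EuclideanSpace.single ν 1),
    e2 (EuclideanSpace.single ν 1), e0 (EuclideanSpace.single μ 1),
    e1 (EuclideanSpace.single μ 1), e2 (EuclideanSpace.single μ 1)]
  linear_combination key
end
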